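/- arXiv:2507.16644 — 2 statements merged into one kernel-verified Lean document; each statement's English description precedes it below -/
import Mathlib

section
/- Let p ≥ 3 be a prime, and write (q²;q²)_∞² / ((q;q)_∞ (q^p;q^p)_∞) = Σ_{n=0}^∞ a_n q^n. Define N = max over those residues s ∈ {0,…,p−1} attained by some r(r+1)/2 mod p of min{ r(r+1)/2 : 0 ≤ r ≤ p−1, r(r+1)/2 ≡ s (mod p) }, minus p. Then for all n > N: a_n > 0 if n ≡ r(r+1)/2 (mod p) for some r ∈ ℤ/pℤ, and a_n = 0 otherwise. -/
open PowerSeries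

/-- Coefficientwise (product) topology on `ℤ⟦X⟧`, so that infinite products of
power series make sense via `tprod`. -/
noncomputable instance : TopologicalSpace (PowerSeries ℤ) :=
  TopologicalSpace.induced (fun f => fun n => (PowerSeries.coeff (R := ℤ) n) f) inferInstance

/-- `(q^j; q^M)_∞ = ∏_{n=0}^∞ (1 - q^{j + M n})` as a formal power series over `ℤ`. -/
noncomputable def qPoch (j M : ℕ) : PowerSeries ℤ :=
  ∏' n : ℕ, (1 - (X : PowerSeries ℤ) ^ (j + M * n))

/-- `(q^k; q^k)_∞ = ∏_{n=1}^∞ (1 - q^{k n})` as a formal power series over `ℤ`. -/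
noncomputable def E (k : ℕ) : PowerSeries ℤ :=
  ∏' n : ℕ, (1 - (X : PowerSeries ℤ) ^ (k * (n + 1)))

open Finset

instance : T2Space (PowerSeries ℤ) := by
  refine Topology.IsEmbedding.t2Space (f := fun f => fun n => (PowerSeries.coeff (R := ℤ) n) f) ⟨⟨rfl⟩, ?_⟩
  intro f g h
  exact PowerSeries.ext fun n => congrFun h n

/-- products of series ≡ 1 mod X^c are ≡ 1 -/
lemma prod_one_dvd (c : ℕ) (s : Finset ℕ) (f : ℕ → PowerSeries ℤ)
    (hf : ∀ i ∈ s, (X:PowerSeries ℤ)^c ∣ f i - 1) :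
    (X:PowerSeries ℤ)^c ∣ (∏ i ∈ s, f i) - 1 := by
  classical
  induction s using Finset.induction with
  | empty => simp
  | @insert a s' hx ih =>
    rw [Finset.prod_insert hx]
    have h1 := hf a (Finset.mem_insert_self a s')
    have h2 := ih (fun i hi => hf i (Finset.mem_insert_of_mem hi))
    have : f a * ∏ i ∈ s', f i - 1 = f a * ((∏ i ∈ s', f i) - 1) + (f a - 1) := by ring
    rw [this]
    exact dvd_add (Dvd.dvd.mul_left h2 _) h1

lemma coeff_eq_of_dvd {n c : ℕ} (h : n < c) {A B : PowerSeries ℤ}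
    (hd : (X:PowerSeries ℤ)^c ∣ A - B) : coeff (R := ℤ) n A = coeff (R := ℤ) n B := by
  have := (PowerSeries.X_pow_dvd_iff.mp hd) n h
  rw [map_sub] at this; linarith

lemma dvd_sub_mul_mul {c : ℕ} {A B C D : PowerSeries ℤ}
    (h1 : (X:PowerSeries ℤ)^c ∣ A - B) (h2 : (X:PowerSeries ℤ)^c ∣ C - D) :
    (X:PowerSeries ℤ)^c ∣ A * C - B * D := by
  have : A * C - B * D = (A - B) * C + B * (C - D) := by ring
  rw [this]
  exact dvd_add (h1.mul_right _) (h2.mul_left _)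

/-- master lemma: coefficient of a partial product is stable -/
lemma coeff_prod_stable (n : ℕ) (f : ℕ → PowerSeries ℤ)
    (hf : ∀ i, (X:PowerSeries ℤ)^(i+1) ∣ f i - 1)
    {s t : Finset ℕ} (hs : Finset.range (n+1) ⊆ s) (hst : s ⊆ t) :
    coeff (R := ℤ) n (∏ i ∈ t, f i) = coeff (R := ℤ) n (∏ i ∈ s, f i) := by
  classical
  rw [← Finset.prod_sdiff hst]
  have hd : (X:PowerSeries ℤ)^(n+1) ∣ (∏ i ∈ t \ s, f i) - 1 := by
    apply prod_one_dvd
    intro i hi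
    have hins : ¬ i ∈ s := (Finset.mem_sdiff.mp hi).2
    have : n + 1 ≤ i + 1 := by
      by_contra hc
      exact hins (hs (Finset.mem_range.mpr (by omega)))
    exact dvd_trans (pow_dvd_pow _ this) (hf i)
  apply coeff_eq_of_dvd (Nat.lt_succ_self n)
  have : (∏ i ∈ t \ s, f i) * ∏ i ∈ s, f i - ∏ i ∈ s, f i
      = (∏ i ∈ s, f i) * ((∏ i ∈ t \ s, f i) - 1) := by ring
  rw [this]
  exact Dvd.dvd.mul_left hd _

lemma hasProd_of_dvd (f : ℕ → PowerSeries ℤ)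
    (hf : ∀ i, (X:PowerSeries ℤ)^(i+1) ∣ f i - 1) :
    HasProd f (PowerSeries.mk fun n => coeff (R := ℤ) n (∏ i ∈ Finset.range (n+1), f i)) := by
  rw [HasProd]
  rw [show (nhds (PowerSeries.mk fun n => coeff (R := ℤ) n (∏ i ∈ Finset.range (n+1), f i)))
    = Filter.comap (fun f => fun n => (PowerSeries.coeff (R := ℤ) n) f) _ from nhds_induced _ _]
  rw [Filter.tendsto_comap_iff]
  rw [tendsto_pi_nhds]
  intro n
  apply Filter.Tendsto.congr' (f₁ := fun _ => coeff (R := ℤ) n (∏ i ∈ Finset.range (n+1), f i))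
  · filter_upwards [Filter.eventually_ge_atTop (Finset.range (n+1))] with s hs
    exact (coeff_prod_stable n f hf (le_refl _) hs).symm
  · rw [coeff_mk]
    exact tendsto_const_nhds

lemma tprod_eq_mk (f : ℕ → PowerSeries ℤ)
    (hf : ∀ i, (X:PowerSeries ℤ)^(i+1) ∣ f i - 1) :
    (∏' i, f i) = PowerSeries.mk fun n => coeff (R := ℤ) n (∏ i ∈ Finset.range (n+1), f i) :=
  (hasProd_of_dvd f hf).tprod_eq

/-- coefficients of tprod equal coefficients of any big enough partial product -/
lemma coeff_tprod (f : ℕ → PowerSeries ℤ)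
    (hf : ∀ i, (X:PowerSeries ℤ)^(i+1) ∣ f i - 1) (n M : ℕ) (hM : n + 1 ≤ M) :
    coeff (R := ℤ) n (∏' i, f i) = coeff (R := ℤ) n (∏ i ∈ Finset.range M, f i) := by
  rw [tprod_eq_mk f hf, coeff_mk]
  exact (coeff_prod_stable n f hf (le_refl _) (Finset.range_subset_range.mpr hM)).symm

/-- Triangular number with integer argument -/
def Tz (t : ℤ) : ℕ := (t * (t + 1) / 2).toNat

lemma Tz_cast (t : ℤ) : (Tz t : ℤ) = t * (t + 1) / 2 := by
  apply Int.toNat_of_nonneg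
  obtain ⟨u, hu⟩ := Int.even_mul_succ_self t
  have h8 : 0 ≤ 8*u + 1 := by nlinarith [sq_nonneg (2*t+1)]
  omega

lemma Tz_succ (t : ℤ) : (Tz (t+1) : ℤ) = Tz t + t + 1 := by
  rw [Tz_cast, Tz_cast]
  obtain ⟨u, hu⟩ := Int.even_mul_succ_self t
  have h2 : (t+1) * (t+1+1) = 2*(u + t + 1) + 0 := by nlinarith [hu]
  omega

lemma Tz_neg (t : ℕ) : Tz (-(t+1)) = Tz t := by
  have : (Tz (-(t+1:ℤ)) : ℤ) = (Tz (t:ℤ) : ℤ) := by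
    rw [Tz_cast, Tz_cast]; ring_nf
  exact_mod_cast this

lemma Tz_nat (t : ℕ) : Tz t = t * (t+1) / 2 := by
  have h := Tz_cast (t : ℤ)
  obtain ⟨u, hu⟩ := Nat.even_mul_succ_self t
  have hu' : (t:ℤ) * ((t:ℤ)+1) = (u:ℤ) + (u:ℤ) := by exact_mod_cast hu
  have h2 : (t:ℤ) * ((t:ℤ)+1) / 2 = (u:ℤ) := by omega
  rw [h2] at h
  have h3 : Tz (t:ℤ) = u := by exact_mod_cast h
  omega

lemma Tz_ge (t : ℕ) : t ≤ Tz t := by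
  obtain ⟨u, hu⟩ := Nat.even_mul_succ_self t
  have ht : t ≤ u := by nlinarith [hu]
  have := Tz_nat t
  omega

lemma Tz_big_of_lt (t : ℤ) (n : ℕ) (h1 : t ≤ -(n:ℤ)-2) : (n:ℕ) + 1 ≤ Tz t := by
  obtain ⟨u, hu⟩ := Int.even_mul_succ_self t
  have key : 2*((n:ℤ)+1) ≤ 2*u := by
    nlinarith [hu, mul_nonneg (by omega : (0:ℤ) ≤ -t-(n:ℤ)-2) (by omega : (0:ℤ) ≤ -t-1),
      mul_nonneg (by omega : (0:ℤ) ≤ -t-(n:ℤ)-2) (by positivity : (0:ℤ) ≤ (n:ℤ))]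
  have := Tz_cast t
  omega

lemma Tz_big_of_gt (t : ℤ) (n : ℕ) (h1 : (n:ℤ)+1 ≤ t) : (n:ℕ) + 1 ≤ Tz t := by
  obtain ⟨u, hu⟩ := Int.even_mul_succ_self t
  have key : 2*((n:ℤ)+1) ≤ 2*u := by
    nlinarith [hu, mul_nonneg (by omega : (0:ℤ) ≤ t-(n:ℤ)-1) (by omega : (0:ℤ) ≤ t),
      mul_nonneg (by omega : (0:ℤ) ≤ t-(n:ℤ)-1) (by positivity : (0:ℤ) ≤ (n:ℤ))]
  have := Tz_cast t
  omega

lemma Tz_abs_le (t : ℤ) (n : ℕ) (h : Tz t ≤ n) : -(n:ℤ)-1 ≤ t ∧ t ≤ n := by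
  constructor
  · by_contra hc
    push_neg at hc
    have := Tz_big_of_lt t n (by omega)
    omega
  · by_contra hc
    push_neg at hc
    have := Tz_big_of_gt t n (by omega)
    omega

lemma Tz_lt_nat {s t : ℕ} (h : s < t) : Tz s < Tz t := by
  obtain ⟨u, hu⟩ := Nat.even_mul_succ_self s
  obtain ⟨v, hv⟩ := Nat.even_mul_succ_self t
  have h1 : s * (s+1) < t * (t+1) := by
    calc s * (s+1) < (s+1) * (s+1+1) := by nlinarith
    _ ≤ t * (t+1) := Nat.mul_le_mul h (by omega)
  have := Tz_nat s
  have := Tz_nat t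
  omega

lemma Tz_injective_nat {s t : ℕ} (h : Tz (s:ℤ) = Tz (t:ℤ)) : s = t := by
  rcases Nat.lt_trichotomy s t with hlt | heq | hgt
  · exact absurd h (by have := Tz_lt_nat hlt; omega)
  · exact heq
  · exact absurd h (by have := Tz_lt_nat hgt; omega)

/-- finite Pochhammer (q;q)_M -/
noncomputable def pochk (M : ℕ) : PowerSeries ℤ := ∏ j ∈ Finset.range M, (1 - X ^ (j+1))

lemma pochk_succ (M : ℕ) : pochk (M+1) = pochk M * (1 - X ^ (M+1)) := by
  rw [pochk, Finset.prod_range_succ, pochk]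

lemma pochk_ne_zero (M : ℕ) : pochk M ≠ 0 := by
  intro h
  have h0 : constantCoeff (R := ℤ) (pochk M) = 1 := by
    rw [pochk, map_prod]
    apply Finset.prod_eq_one
    intro j _
    simp [PowerSeries.constantCoeff_X]
  rw [h] at h0
  simp at h0

/-- Gaussian binomial coefficient as a power series in q -/
noncomputable def qbin : ℕ → ℕ → PowerSeries ℤ
  | 0, 0 => 1
  | 0, _+1 => 0
  | _+1, 0 => 1
  | n+1, k+1 => qbin n (k+1) + X ^ (n-k) * qbin n k

lemma qbin_zero (n : ℕ) : qbin n 0 = 1 := by cases n <;> rfl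

lemma qbin_eq_zero {n k : ℕ} (h : n < k) : qbin n k = 0 := by
  induction n generalizing k with
  | zero => obtain ⟨k', rfl⟩ : ∃ k', k = k' + 1 := ⟨k - 1, by omega⟩; rfl
  | succ n ih =>
    obtain ⟨k', rfl⟩ : ∃ k', k = k' + 1 := ⟨k - 1, by omega⟩
    show qbin n (k'+1) + X ^ (n-k') * qbin n k' = 0
    rw [ih (by omega), ih (by omega)]
    ring

lemma qbin_diag (n : ℕ) : qbin n n = 1 := by
  induction n with
  | zero => rfl
  | succ n ih =>
    show qbin n (n+1) + X ^ (n-n) * qbin n n = 1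
    rw [qbin_eq_zero (by omega), ih]
    simp

/-- product formula: qbin n k * (q;q)_k * (q;q)_{n-k} = (q;q)_n -/
lemma qbin_prod {n k : ℕ} (h : k ≤ n) :
    qbin n k * (pochk k * pochk (n-k)) = pochk n := by
  induction n generalizing k with
  | zero =>
    interval_cases k
    simp [qbin_diag, pochk]
  | succ n ih =>
    rcases Nat.eq_zero_or_pos k with rfl | hk
    · simp [qbin_zero, pochk]
    obtain ⟨k', rfl⟩ : ∃ k', k = k' + 1 := ⟨k - 1, by omega⟩
    rcases Nat.eq_or_lt_of_le h with heq | hlt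
    · rw [← heq]
      rw [qbin_diag]
      simp [Nat.sub_self, pochk]
    have hk'n : k' + 1 ≤ n := by omega
    show (qbin n (k'+1) + X ^ (n-k') * qbin n k') * (pochk (k'+1) * pochk (n+1-(k'+1))) = pochk (n+1)
    have e1 : n + 1 - (k'+1) = (n - (k'+1)) + 1 := by omega
    have e2 : n - k' = (n - (k'+1)) + 1 := by omega
    rw [e1, pochk_succ]
    have ih1 := ih hk'n
    have ih2 := ih (show k' ≤ n by omega)
    have e3 : n - (k'+1) + 1 = n - k' := by omega
    rw [e3]
    have hp1 : pochk (k'+1) = pochk k' * (1 - X^(k'+1)) := pochk_succ k'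
    have hp2 : pochk (n-k') = pochk (n-(k'+1)) * (1 - X^(n-k')) := by
      conv_lhs => rw [← e3]
      rw [pochk_succ, e3]
    have hps : pochk (n+1) = pochk n * (1 - X^(n+1)) := pochk_succ n
    have hx : (X:PowerSeries ℤ)^(n-k') * X^(k'+1) = X^(n+1) := by
      rw [← pow_add]; congr 1; omega
    rw [hp2] at ih2 ⊢
    rw [hp1] at ih1
    rw [hps, ← hx]
    linear_combination (1 - (X:PowerSeries ℤ)^(n-k'))*ih1 + (X:PowerSeries ℤ)^(n-k')*(1 - X^(k'+1))*ih2

lemma qbin_pascal_a (n k : ℕ) : qbin (n+1) (k+1) = qbin n (k+1) + X ^ (n-k) * qbin n k := rfl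

lemma qbin_pascal_b (n k : ℕ) : qbin (n+1) (k+1) = X^(k+1) * qbin n (k+1) + qbin n k := by
  rcases Nat.lt_or_ge n k with hnk | hkn
  · rw [qbin_eq_zero (by omega), qbin_eq_zero (by omega), qbin_eq_zero (by omega)]
    ring
  rcases Nat.eq_or_lt_of_le hkn with rfl | hlt
  · rw [qbin_diag, qbin_eq_zero (by omega), qbin_diag]
    ring
  -- now k < n
  apply mul_right_cancel₀ (b := pochk (k+1) * pochk (n-k))
    (mul_ne_zero (pochk_ne_zero _) (pochk_ne_zero _))
  have h1 : qbin (n+1) (k+1) * (pochk (k+1) * pochk (n+1-(k+1))) = pochk (n+1) :=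
    qbin_prod (by omega)
  have e1 : n + 1 - (k+1) = n - k := by omega
  rw [e1] at h1
  have h2 : qbin n (k+1) * (pochk (k+1) * pochk (n-(k+1))) = pochk n := qbin_prod (by omega)
  have h3 : qbin n k * (pochk k * pochk (n-k)) = pochk n := qbin_prod (by omega)
  have hp1 : pochk (k+1) = pochk k * (1 - X^(k+1)) := pochk_succ k
  have hp2 : pochk (n-k) = pochk (n-(k+1)) * (1 - X^(n-k)) := by
    have e : n - k = (n - (k+1)) + 1 := by omega
    rw [e]
    exact pochk_succ _
  have hps : pochk (n+1) = pochk n * (1 - X^(n+1)) := pochk_succ n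
  have hx : (X:PowerSeries ℤ)^(k+1) * X^(n-k) = X^(n+1) := by
    rw [← pow_add]; congr 1; omega
  rw [h1, hps, ← hx]
  rw [hp2] at h3 ⊢
  rw [hp1] at h2 ⊢
  linear_combination (-((X:PowerSeries ℤ)^(k+1) * (1 - X^(n-k)))) * h2 - (1 - (X:PowerSeries ℤ)^(k+1)) * h3

lemma qbin_P2 (n i : ℕ) :
    qbin (n+2) (i+2) = X^(i+2) * qbin n (i+2) + (1 + X^(n+1)) * qbin n (i+1) + X^(n-i) * qbin n i := by
  rcases Nat.lt_or_ge n i with hni | hin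
  · rw [qbin_eq_zero (show n+2 < i+2 by omega), qbin_eq_zero (by omega), qbin_eq_zero (by omega),
      qbin_eq_zero (by omega)]
    ring
  have step1 : qbin (n+2) (i+2) = qbin (n+1) (i+2) + X ^ (n-i) * qbin (n+1) (i+1) := by
    have := qbin_pascal_a (n+1) (i+1)
    simpa [show n+1-(i+1) = n-i by omega] using this
  rw [step1, qbin_pascal_b n (i+1), qbin_pascal_b n i]
  have hx : (X:PowerSeries ℤ)^(n-i) * X^(i+1) = X^(n+1) := by
    rw [← pow_add]; congr 1; omega
  linear_combination (qbin n (i+1)) * hx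

lemma qbin_P1 (n : ℕ) :
    qbin (n+2) 1 = X * qbin n 1 + (1 + X^(n+1)) * qbin n 0 := by
  have h1 : qbin (n+2) 1 = qbin (n+1) 1 + X^(n+1-0) * qbin (n+1) 0 := qbin_pascal_a (n+1) 0
  have h2 : qbin (n+1) 1 = X^(0+1) * qbin n 1 + qbin n 0 := qbin_pascal_b n 0
  rw [h1, h2]
  simp only [qbin_zero, Nat.sub_zero, zero_add, pow_one, mul_one]
  ring

lemma expA (m i : ℕ) : i + Tz ((i:ℤ)-m-1) = m + Tz ((i:ℤ)-m) := by
  have h := Tz_succ ((i:ℤ)-(m:ℤ)-1)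
  have e : ((i:ℤ)-(m:ℤ)-1)+1 = (i:ℤ)-(m:ℤ) := by ring
  rw [e] at h
  omega

lemma expC (m i : ℕ) (h : i ≤ 2*m) : (2*m - i) + Tz ((i:ℤ)-m+1) = (m+1) + Tz ((i:ℤ)-m) := by
  have h2 := Tz_succ ((i:ℤ)-(m:ℤ))
  omega

lemma align (a b c d : ℕ) (Q : PowerSeries ℤ) (h : a + b = c + d) :
    X^a * Q * X^b = X^c * (Q * X^d) := by
  calc X^a * Q * X^b = X^(a+b) * Q := by rw [pow_add]; ring
  _ = X^(c+d) * Q := by rw [h]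
  _ = X^c * (Q * X^d) := by rw [pow_add]; ring

lemma sum_shift2 (N : ℕ) (f : ℕ → PowerSeries ℤ) (h1 : f (N+1) = 0) (h2 : f (N+2) = 0) :
    (∑ k ∈ Finset.range (N+1), f (k+2)) + f 1 + f 0 = ∑ k ∈ Finset.range (N+1), f k := by
  have e1 : ∑ k ∈ Finset.range (N+3), f k = (∑ k ∈ Finset.range (N+2), f (k+1)) + f 0 :=
    Finset.sum_range_succ' f (N+2)
  have e2 : ∑ k ∈ Finset.range (N+2), f (k+1) = (∑ k ∈ Finset.range (N+1), f (k+1+1)) + f (0+1) :=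
    Finset.sum_range_succ' (fun k => f (k+1)) (N+1)
  have e3 : ∑ k ∈ Finset.range (N+3), f k = (∑ k ∈ Finset.range (N+1), f k) + f (N+1) + f (N+2) := by
    rw [Finset.sum_range_succ, Finset.sum_range_succ]
  rw [e2] at e1
  rw [e3, h1, h2] at e1
  have : ∀ k, f (k+1+1) = f (k+2) := fun k => rfl
  simp only [this] at e1
  linear_combination -e1

lemma sum_shift1 (N : ℕ) (f : ℕ → PowerSeries ℤ) (h1 : f (N+1) = 0) :
    (∑ k ∈ Finset.range (N+1), f (k+1)) + f 0 = ∑ k ∈ Finset.range (N+1), f k := by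
  have e1 : ∑ k ∈ Finset.range (N+2), f k = (∑ k ∈ Finset.range (N+1), f (k+1)) + f 0 :=
    Finset.sum_range_succ' f (N+1)
  have e3 : ∑ k ∈ Finset.range (N+2), f k = (∑ k ∈ Finset.range (N+1), f k) + f (N+1) := by
    rw [Finset.sum_range_succ]
  rw [e3, h1] at e1
  linear_combination -e1

/-- The finite Gauss identity (Jacobi triple product specialized at z = 1). -/
lemma gauss_finite (m : ℕ) :
    ∏ j ∈ Finset.range m, ((1+X^(j+1))*(1+(X:PowerSeries ℤ)^j))
      = ∑ i ∈ Finset.range (2*m+1), qbin (2*m) i * X^(Tz ((i:ℤ) - (m:ℤ))) := by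
  induction m with
  | zero => simp [qbin_diag, Tz]
  | succ m ih =>
    set h : ℕ → PowerSeries ℤ := fun i => qbin (2*m) i * X^(Tz ((i:ℤ) - (m:ℤ))) with hh
    set g : ℕ → PowerSeries ℤ := fun i => qbin (2*(m+1)) i * X^(Tz ((i:ℤ) - ((m+1:ℕ):ℤ))) with hg
    have hv1 : h (2*m+1) = 0 := by
      simp only [hh]
      rw [qbin_eq_zero (show 2*m < 2*m+1 by omega)]
      ring
    have hv2 : h (2*m+2) = 0 := by
      simp only [hh]
      rw [qbin_eq_zero (show 2*m < 2*m+2 by omega)]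
      ring
    have e22 : 2*(m+1) = 2*m+2 := by ring
    have hg0 : g 0 = X^m * h 0 := by
      simp only [hg, hh, qbin_zero, one_mul]
      have e1 : ((0:ℕ):ℤ) - ((m+1:ℕ):ℤ) = ((0:ℕ):ℤ) - (m:ℤ) - 1 := by push_cast; ring
      rw [e1, ← pow_add]
      congr 1
      have := expA m 0
      omega
    have hg1 : g 1 = X^m * h 1 + (1+X^(2*m+1)) * h 0 := by
      simp only [hg, hh]
      rw [e22, qbin_P1]
      simp only [qbin_zero, mul_one, one_mul]
      have e1 : ((1:ℕ):ℤ) - ((m+1:ℕ):ℤ) = ((0:ℕ):ℤ) - (m:ℤ) := by push_cast; ring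
      rw [e1]
      have hal : (X:PowerSeries ℤ)^1 * qbin (2*m) 1 * X^(Tz (((0:ℕ):ℤ) - (m:ℤ)))
          = X^m * (qbin (2*m) 1 * X^(Tz (((1:ℕ):ℤ) - (m:ℤ)))) := by
        apply align
        have := expA m 1
        have e2 : ((1:ℕ):ℤ) - (m:ℤ) - 1 = ((0:ℕ):ℤ) - (m:ℤ) := by push_cast; ring
        rw [e2] at this
        omega
      linear_combination hal
    have hg2 : ∀ k ∈ Finset.range (2*m+1),
        g (k+1+1) = X^m * h (k+2) + (1+X^(2*m+1)) * h (k+1) + X^(m+1) * h k := by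
      intro k hk
      have hk' : k ≤ 2*m := by
        have := Finset.mem_range.mp hk; omega
      simp only [hg, hh]
      rw [e22, qbin_P2 (2*m) k]
      have e1 : ((k+1+1:ℕ):ℤ) - ((m+1:ℕ):ℤ) = ((k+2:ℕ):ℤ) - (m:ℤ) - 1 := by push_cast; ring
      rw [e1]
      rw [add_mul, add_mul]
      have hA : (X:PowerSeries ℤ)^(k+2) * qbin (2*m) (k+2) * X^(Tz (((k+2:ℕ):ℤ) - (m:ℤ) - 1))
          = X^m * (qbin (2*m) (k+2) * X^(Tz (((k+2:ℕ):ℤ) - (m:ℤ)))) := by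
        apply align
        exact expA m (k+2)
      have hB : (1+(X:PowerSeries ℤ)^(2*m+1)) * qbin (2*m) (k+1) * X^(Tz (((k+2:ℕ):ℤ) - (m:ℤ) - 1))
          = (1+X^(2*m+1)) * (qbin (2*m) (k+1) * X^(Tz (((k+1:ℕ):ℤ) - (m:ℤ)))) := by
        have e2 : ((k+2:ℕ):ℤ) - (m:ℤ) - 1 = ((k+1:ℕ):ℤ) - (m:ℤ) := by push_cast; ring
        rw [e2, mul_assoc]
      have hC : (X:PowerSeries ℤ)^(2*m-k) * qbin (2*m) k * X^(Tz (((k+2:ℕ):ℤ) - (m:ℤ) - 1))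
          = X^(m+1) * (qbin (2*m) k * X^(Tz (((k:ℕ):ℤ) - (m:ℤ)))) := by
        apply align
        have e3 : ((k+2:ℕ):ℤ) - (m:ℤ) - 1 = ((k:ℕ):ℤ) - (m:ℤ) + 1 := by push_cast; ring
        rw [e3]
        exact expC m k hk'
      rw [hA, hB, hC]
    have split : ∑ i ∈ Finset.range (2*(m+1)+1), g i
        = (∑ k ∈ Finset.range (2*m+1), g (k+1+1)) + g (0+1) + g 0 := by
      have e : 2*(m+1)+1 = (2*m+2)+1 := by ring
      rw [e]
      rw [Finset.sum_range_succ' g (2*m+2)]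
      rw [Finset.sum_range_succ' (fun k => g (k+1)) (2*m+1)]
    have L1 := sum_shift2 (2*m) h hv1 hv2
    have L2 := sum_shift1 (2*m) h hv1
    rw [Finset.prod_range_succ, ih, split, Finset.sum_congr rfl hg2]
    rw [Finset.sum_add_distrib, Finset.sum_add_distrib, ← Finset.mul_sum, ← Finset.mul_sum,
      ← Finset.mul_sum]
    have hg1' : g (0+1) = X^m * h 1 + (1+X^(2*m+1)) * h 0 := hg1
    rw [hg1', hg0]
    have L1' : ∑ k ∈ Finset.range (2*m+1), h (k+2)
        = (∑ k ∈ Finset.range (2*m+1), h k) - h 1 - h 0 := by linear_combination L1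
    have L2' : ∑ k ∈ Finset.range (2*m+1), h (k+1)
        = (∑ k ∈ Finset.range (2*m+1), h k) - h 0 := by linear_combination L2
    rw [L1', L2']
    ring

open scoped Classical in
/-- indicator series of triangular numbers -/
noncomputable def Psi : PowerSeries ℤ :=
  PowerSeries.mk fun n => if ∃ r ≤ n, Tz (r:ℤ) = n then 1 else 0

lemma psi_trunc (K n : ℕ) (h : n + 1 ≤ K) :
    (X:PowerSeries ℤ)^(n+1) ∣ Psi - ∑ k ∈ Finset.range K, X^(Tz (k:ℤ)) := by
  classical
  rw [PowerSeries.X_pow_dvd_iff]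
  intro m hm
  rw [map_sub, Psi, coeff_mk]
  have hsum : coeff (R := ℤ) m (∑ k ∈ Finset.range K, (X:PowerSeries ℤ)^(Tz (k:ℤ)))
      = ∑ k ∈ Finset.range K, if m = Tz (k:ℤ) then (1:ℤ) else 0 := by
    rw [map_sum]
    congr 1
    funext k
    exact PowerSeries.coeff_X_pow m (Tz (k:ℤ))
  rw [hsum]
  by_cases hex : ∃ r ≤ m, Tz (r:ℤ) = m
  · obtain ⟨r, hr, hrt⟩ := hex
    have hs1 : (∑ k ∈ Finset.range K, if m = Tz (k:ℤ) then (1:ℤ) else 0) = 1 := by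
      rw [Finset.sum_eq_single_of_mem r (Finset.mem_range.mpr (by omega))]
      · rw [if_pos hrt.symm]
      · intro k _ hkr
        rw [if_neg]
        intro hc
        exact hkr (Tz_injective_nat (by omega))
    rw [if_pos ⟨r, hr, hrt⟩, hs1]
    ring
  · have hs0 : (∑ k ∈ Finset.range K, if m = Tz (k:ℤ) then (1:ℤ) else 0) = 0 := by
      apply Finset.sum_eq_zero
      intro k _
      rw [if_neg]
      intro hc
      exact hex ⟨k, by have := Tz_ge k; omega, hc.symm⟩
    rw [if_neg hex, hs0]
    ring

lemma prod_stable (f : ℕ → PowerSeries ℤ) (hf : ∀ i, (X:PowerSeries ℤ)^(i+1) ∣ f i - 1)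
    {c M M' : ℕ} (h1 : c ≤ M') (h2 : M' ≤ M) :
    (X:PowerSeries ℤ)^c ∣ (∏ i ∈ Finset.range M, f i) - (∏ i ∈ Finset.range M', f i) := by
  rw [← Finset.prod_range_mul_prod_Ico f h2]
  have : (∏ i ∈ Finset.range M', f i) * (∏ i ∈ Finset.Ico M' M, f i) - ∏ i ∈ Finset.range M', f i
      = (∏ i ∈ Finset.range M', f i) * ((∏ i ∈ Finset.Ico M' M, f i) - 1) := by ring
  rw [this]
  apply Dvd.dvd.mul_left
  apply prod_one_dvd
  intro i hi
  have : M' ≤ i := (Finset.mem_Ico.mp hi).1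
  exact dvd_trans (pow_dvd_pow _ (by omega)) (hf i)

lemma pochk_const (M : ℕ) : constantCoeff (R := ℤ) (pochk M) = 1 := by
  rw [pochk, map_prod]
  apply Finset.prod_eq_one
  intro j _
  simp [PowerSeries.constantCoeff_X]

lemma unit_cancel {c : ℕ} {A B : PowerSeries ℤ} (hA : constantCoeff (R := ℤ) A = 1)
    (h : (X:PowerSeries ℤ)^c ∣ A * B) : (X:PowerSeries ℤ)^c ∣ B := by
  have hu : IsUnit A := PowerSeries.isUnit_iff_constantCoeff.mpr (hA ▸ isUnit_one)
  obtain ⟨u, rfl⟩ := hu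
  have : B = (↑u⁻¹ : PowerSeries ℤ) * ((u:PowerSeries ℤ) * B) := by
    rw [← mul_assoc]
    simp
  rw [this]
  exact h.mul_left _

lemma two_cancel {c : ℕ} {A : PowerSeries ℤ} (h : (X:PowerSeries ℤ)^c ∣ 2 * A) :
    (X:PowerSeries ℤ)^c ∣ A := by
  rw [PowerSeries.X_pow_dvd_iff] at h ⊢
  intro m hm
  have h2 := h m hm
  rw [show ((2:PowerSeries ℤ) * A) = A + A by ring, map_add] at h2
  omega

lemma pochk_stable {c M M' : ℕ} (h1 : c ≤ M') (h2 : M' ≤ M) :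
    (X:PowerSeries ℤ)^c ∣ pochk M - pochk M' := by
  apply prod_stable _ _ h1 h2
  intro i
  have e : (1 - (X:PowerSeries ℤ)^(i+1)) - 1 = -(X^(i+1)) := by ring
  rw [e]
  exact dvd_neg.mpr dvd_rfl

/-- the key stabilization: qbin (2M) i * pochk (n+1) ≡ 1 when i and 2M - i are ≥ n+1 -/
lemma qbin_stable {n M i : ℕ} (h1 : n+1 ≤ i) (h2 : i ≤ 2*M) (h3 : n+1 ≤ 2*M - i) :
    (X:PowerSeries ℤ)^(n+1) ∣ qbin (2*M) i * pochk (n+1) - 1 := by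
  have hpf := qbin_prod (n := 2*M) (k := i) h2
  set c := n+1 with hc
  set P := pochk c with hP
  set q := qbin (2*M) i with hq
  have hs1 : (X:PowerSeries ℤ)^c ∣ P - pochk i := dvd_sub_comm.mp (pochk_stable (le_refl c) h1)
  have hs2 : (X:PowerSeries ℤ)^c ∣ P - pochk (2*M-i) := dvd_sub_comm.mp (pochk_stable (le_refl c) h3)
  have hs3 : (X:PowerSeries ℤ)^c ∣ pochk (2*M) - P := pochk_stable (by omega) (by omega)
  have d1 : (X:PowerSeries ℤ)^c ∣ P*P - pochk i * pochk (2*M-i) := dvd_sub_mul_mul hs1 hs2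
  have key : (X:PowerSeries ℤ)^c ∣ q * P * P - P := by
    have e : q*P*P - P = q*(P*P - pochk i * pochk (2*M-i)) + (pochk (2*M) - P) := by
      linear_combination hpf
    rw [e]
    exact dvd_add (d1.mul_left q) hs3
  apply unit_cancel (pochk_const c)
  have e2 : P * (q * P - 1) = q * P * P - P := by ring
  rw [e2]
  exact key

lemma E_dvd (k : ℕ) (hk : 1 ≤ k) (n M : ℕ) (hM : n+1 ≤ M) :
    (X:PowerSeries ℤ)^(n+1) ∣ E k - ∏ j ∈ Finset.range M, (1 - X^(k*(j+1))) := by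
  have hf : ∀ i, (X:PowerSeries ℤ)^(i+1) ∣ (1 - X^(k*(i+1))) - 1 := by
    intro i
    have e : (1 - (X:PowerSeries ℤ)^(k*(i+1))) - 1 = -(X^(k*(i+1))) := by ring
    rw [e]
    exact dvd_neg.mpr (pow_dvd_pow _ (by nlinarith))
  rw [PowerSeries.X_pow_dvd_iff]
  intro m hm
  rw [map_sub]
  have h1 : coeff (R := ℤ) m (E k) = coeff (R := ℤ) m (∏ j ∈ Finset.range M, (1 - X^(k*(j+1)))) := by
    rw [E]
    exact coeff_tprod _ hf m M (by omega)
  rw [h1]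
  ring

theorem gauss_identity : E 1 * Psi = (E 2)^2 := by
  ext n
  set c := n+1 with hc
  set M := 2*n+2 with hM
  set A := pochk M with hA
  set Bp := ∏ j ∈ Finset.range M, (1+(X:PowerSeries ℤ)^(j+1)) with hBp
  set Bp' := ∏ j ∈ Finset.range (2*n+1), (1+(X:PowerSeries ℤ)^(j+1)) with hBp'
  set D2 := ∏ j ∈ Finset.range M, (1-(X:PowerSeries ℤ)^(2*(j+1))) with hD2def
  set Sg := ∑ i ∈ Finset.range (2*M+1), qbin (2*M) i * X^(Tz ((i:ℤ) - (M:ℤ))) with hSg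
  set Sfull := ∑ i ∈ Finset.range (2*M+1), (X:PowerSeries ℤ)^(Tz ((i:ℤ) - (M:ℤ))) with hSfull
  -- E-approximations
  have h1 : (X:PowerSeries ℤ)^c ∣ E 1 - A := by
    have := E_dvd 1 (le_refl 1) n M (by omega)
    have e : ∏ j ∈ Finset.range M, (1 - (X:PowerSeries ℤ)^(1*(j+1))) = A := by
      rw [hA, pochk]
      apply Finset.prod_congr rfl
      intro j _
      rw [one_mul]
    rwa [e] at this
  have h2 : (X:PowerSeries ℤ)^c ∣ E 2 - D2 := E_dvd 2 (by omega) n M (by omega)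
  have hD2 : D2 = A * Bp := by
    rw [hD2def, hA, hBp, pochk, ← Finset.prod_mul_distrib]
    apply Finset.prod_congr rfl
    intro j _
    ring
  -- finite Gauss
  have gf := gauss_finite M
  have hsplit : ∏ j ∈ Finset.range M, ((1+X^(j+1))*(1+(X:PowerSeries ℤ)^j)) = Bp * (2 * Bp') := by
    rw [Finset.prod_mul_distrib]
    congr 1
    have e : M = (2*n+1)+1 := by omega
    rw [e, Finset.prod_range_succ' (fun j => (1+(X:PowerSeries ℤ)^j)) (2*n+1)]
    norm_num
    ring
  have key0 : Bp * (2 * Bp') = Sg := by rw [← hsplit]; exact gf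
  have hBps : (X:PowerSeries ℤ)^c ∣ Bp - Bp' := by
    apply prod_stable _ _ (show c ≤ 2*n+1 by omega) (show 2*n+1 ≤ M by omega)
    intro i
    have e : (1 + (X:PowerSeries ℤ)^(i+1)) - 1 = X^(i+1) := by ring
    rw [e]
  have step2 : (X:PowerSeries ℤ)^c ∣ 2*(Bp*Bp) - Sg := by
    have e : 2*(Bp*Bp) - Sg = (2*Bp)*(Bp - Bp') := by linear_combination key0
    rw [e]
    exact hBps.mul_left _
  -- step4 : A * Sg ≈ Sfull
  have step4 : (X:PowerSeries ℤ)^c ∣ A * Sg - Sfull := by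
    rw [hSg, hSfull, Finset.mul_sum, ← Finset.sum_sub_distrib]
    apply Finset.dvd_sum
    intro i hi
    have hi' : i ≤ 2*M := by
      have := Finset.mem_range.mp hi; omega
    have e : A * (qbin (2*M) i * X^(Tz ((i:ℤ) - (M:ℤ)))) - X^(Tz ((i:ℤ) - (M:ℤ)))
        = (qbin (2*M) i * A - 1) * X^(Tz ((i:ℤ) - (M:ℤ))) := by ring
    rw [e]
    by_cases hT : Tz ((i:ℤ) - (M:ℤ)) ≤ n
    · apply Dvd.dvd.mul_right
      obtain ⟨hb1, hb2⟩ := Tz_abs_le _ _ hT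
      have hge : n+1 ≤ i := by omega
      have hle : n+1 ≤ 2*M - i := by omega
      have hq := qbin_stable (n := n) (M := M) (i := i) hge hi' hle
      have hAP : (X:PowerSeries ℤ)^c ∣ A - pochk c := pochk_stable (by omega) (by omega)
      have e2 : qbin (2*M) i * A - 1
          = qbin (2*M) i * (A - pochk c) + (qbin (2*M) i * pochk (n+1) - 1) := by
        rw [hc]; ring
      rw [e2]
      exact dvd_add (hAP.mul_left _) hq
    · apply Dvd.dvd.mul_left
      exact pow_dvd_pow _ (by omega)
  -- step5 : Sfull = two triangular partial sums
  have step5 : Sfull = (∑ t ∈ Finset.range (M+1), (X:PowerSeries ℤ)^(Tz (t:ℤ)))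
      + ∑ t ∈ Finset.range M, (X:PowerSeries ℤ)^(Tz (t:ℤ)) := by
    rw [hSfull]
    have esplit : ∑ i ∈ Finset.range (2*M+1), (X:PowerSeries ℤ)^(Tz ((i:ℤ) - (M:ℤ)))
        = (∑ i ∈ Finset.range M, (X:PowerSeries ℤ)^(Tz ((i:ℤ) - (M:ℤ))))
          + ∑ i ∈ Finset.Ico M (2*M+1), (X:PowerSeries ℤ)^(Tz ((i:ℤ) - (M:ℤ))) := by
      rw [Finset.range_eq_Ico, ← Finset.sum_Ico_consecutive _ (Nat.zero_le M) (by omega)]; rw [Finset.range_eq_Ico]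
    rw [esplit, add_comm]
    congr 1
    · -- second sum: shift
      rw [Finset.sum_Ico_eq_sum_range]
      have e : 2*M+1-M = M+1 := by omega
      rw [e]
      apply Finset.sum_congr rfl
      intro t _
      congr 2
      push_cast
      ring
    · -- first sum: reflect
      rw [← Finset.sum_range_reflect (fun j => (X:PowerSeries ℤ)^(Tz (j:ℤ))) M]
      apply Finset.sum_congr rfl
      intro i hi
      have hiM : i < M := Finset.mem_range.mp hi
      congr 1
      have e : (i:ℤ) - (M:ℤ) = -(((M-1-i:ℕ):ℤ)+1) := by
        push_cast [Nat.cast_sub (by omega : 1+i ≤ M)]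
        omega
      rw [e, Tz_neg]
  have step5b : (X:PowerSeries ℤ)^c ∣ Sfull - 2*Psi := by
    rw [step5]
    have p1 := psi_trunc (M+1) n (by omega)
    have p2 := psi_trunc M n (by omega)
    have e : (∑ t ∈ Finset.range (M+1), (X:PowerSeries ℤ)^(Tz (t:ℤ)))
        + (∑ t ∈ Finset.range M, (X:PowerSeries ℤ)^(Tz (t:ℤ))) - 2*Psi
        = -((Psi - ∑ t ∈ Finset.range (M+1), (X:PowerSeries ℤ)^(Tz (t:ℤ)))
            + (Psi - ∑ t ∈ Finset.range M, (X:PowerSeries ℤ)^(Tz (t:ℤ)))) := by ring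
    rw [e]
    exact dvd_neg.mpr (dvd_add p1 p2)
  -- assemble
  have main : (X:PowerSeries ℤ)^c ∣ 2*(E 1 * Psi) - 2*(E 2 * E 2) := by
    have k1 : (X:PowerSeries ℤ)^c ∣ 2*(E 1 * Psi) - 2*(A*Psi) := by
      have := h1.mul_right Psi
      have e : 2*(E 1 * Psi) - 2*(A*Psi) = 2*((E 1 - A)*Psi) := by ring
      rw [e]; exact this.mul_left 2
    have k2 : (X:PowerSeries ℤ)^c ∣ 2*(A*Psi) - A*Sfull := by
      have e : 2*(A*Psi) - A*Sfull = -(A*(Sfull - 2*Psi)) := by ring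
      rw [e]; exact dvd_neg.mpr (step5b.mul_left A)
    have k3 : (X:PowerSeries ℤ)^c ∣ A*Sfull - A*(A*Sg) := by
      have e : A*Sfull - A*(A*Sg) = -(A*(A*Sg - Sfull)) := by ring
      rw [e]; exact dvd_neg.mpr (step4.mul_left A)
    have k4 : (X:PowerSeries ℤ)^c ∣ A*(A*Sg) - 2*(E 2 * E 2) := by
      have e : A*(A*Sg) - 2*(E 2 * E 2)
          = -((A*A)*(2*(Bp*Bp) - Sg)) - 2*((E 2 - D2)*(E 2 + D2)) + 0 := by
        rw [hD2]; ring
      rw [e]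
      refine dvd_add (dvd_add (dvd_neg.mpr (step2.mul_left _)) (dvd_neg.mpr ?_)) (dvd_zero _)
      exact (h2.mul_right _).mul_left 2
    have e : 2*(E 1 * Psi) - 2*(E 2 * E 2)
        = (2*(E 1 * Psi) - 2*(A*Psi)) + (2*(A*Psi) - A*Sfull)
          + (A*Sfull - A*(A*Sg)) + (A*(A*Sg) - 2*(E 2 * E 2)) := by ring
    rw [e]
    exact dvd_add (dvd_add (dvd_add k1 k2) k3) k4
  have fin : (X:PowerSeries ℤ)^c ∣ E 1 * Psi - E 2 * E 2 := by
    apply two_cancel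
    have e : (2:PowerSeries ℤ)*(E 1 * Psi - E 2 * E 2) = 2*(E 1 * Psi) - 2*(E 2 * E 2) := by ring
    rw [e]; exact main
  have := coeff_eq_of_dvd (show n < c by omega) fin
  rw [this]
  congr 1
  ring

/-- geometric series in X^d -/
noncomputable def geo (d : ℕ) : PowerSeries ℤ := PowerSeries.mk fun n => if d ∣ n then 1 else 0

lemma geo_mul (d : ℕ) (hd : 1 ≤ d) : (1 - (X:PowerSeries ℤ)^d) * geo d = 1 := by
  ext n
  rw [sub_mul, one_mul, map_sub]
  rw [PowerSeries.coeff_X_pow_mul' (geo d) d n]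
  by_cases hdn : d ≤ n
  · rw [if_pos hdn]
    simp only [geo, coeff_mk, PowerSeries.coeff_one]
    rw [if_neg (show ¬ (n = 0) by omega)]
    have hiff : d ∣ n ↔ d ∣ n - d := by
      constructor
      · intro h; exact Nat.dvd_sub h dvd_rfl
      · intro h
        have := Nat.dvd_add h (dvd_refl d)
        rwa [Nat.sub_add_cancel hdn] at this
    by_cases hdvd : d ∣ n
    · rw [if_pos hdvd, if_pos (hiff.mp hdvd)]; ring
    · rw [if_neg hdvd, if_neg (fun hc => hdvd (hiff.mpr hc))]; ring
  · rw [if_neg hdn]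
    simp only [geo, coeff_mk, PowerSeries.coeff_one]
    by_cases hn0 : n = 0
    · subst hn0
      rw [if_pos (dvd_zero d), if_pos rfl]
      ring
    · rw [if_neg (fun hc => hdn (Nat.le_of_dvd (by omega) hc)), if_neg hn0]
      ring

lemma geo_sub_one (d : ℕ) (hd : 1 ≤ d) : geo d - 1 = (X:PowerSeries ℤ)^d * geo d := by
  have h := geo_mul d hd
  linear_combination h

lemma geo_coeff_nonneg (d n : ℕ) : 0 ≤ coeff (R := ℤ) n (geo d) := by
  simp only [geo, coeff_mk]
  split <;> norm_num

lemma geo_const (d : ℕ) : coeff (R := ℤ) 0 (geo d) = 1 := by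
  simp [geo, coeff_mk]

/-- products of series with nonneg coefficients have nonneg coefficients -/
lemma prod_coeff_nonneg (s : Finset ℕ) (f : ℕ → PowerSeries ℤ)
    (hf : ∀ i ∈ s, ∀ m, 0 ≤ coeff (R := ℤ) m (f i)) : ∀ m, 0 ≤ coeff (R := ℤ) m (∏ i ∈ s, f i) := by
  classical
  induction s using Finset.induction with
  | empty => intro m; simp [PowerSeries.coeff_one]; split <;> norm_num
  | @insert a s' ha ih =>
    intro m
    rw [Finset.prod_insert ha, PowerSeries.coeff_mul]
    apply Finset.sum_nonneg
    intro x _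
    exact mul_nonneg (hf a (Finset.mem_insert_self a s') x.1)
      (ih (fun i hi => hf i (Finset.mem_insert_of_mem hi)) x.2)

/-- products of series supported on multiples of p are supported on multiples of p -/
lemma prod_coeff_support (p : ℕ) (s : Finset ℕ) (f : ℕ → PowerSeries ℤ)
    (hf : ∀ i ∈ s, ∀ m, ¬ p ∣ m → coeff (R := ℤ) m (f i) = 0) :
    ∀ m, ¬ p ∣ m → coeff (R := ℤ) m (∏ i ∈ s, f i) = 0 := by
  classical
  induction s using Finset.induction with
  | empty =>
    intro m hm
    rw [Finset.prod_empty, PowerSeries.coeff_one, if_neg]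
    intro h; subst h; exact hm (dvd_zero p)
  | @insert a s' ha ih =>
    intro m hm
    rw [Finset.prod_insert ha, PowerSeries.coeff_mul]
    apply Finset.sum_eq_zero
    intro x hx
    have hxsum : x.1 + x.2 = m := Finset.HasAntidiagonal.mem_antidiagonal.mp hx
    by_cases h1 : p ∣ x.1
    · have h2 : ¬ p ∣ x.2 := by
        intro hc; exact hm (hxsum ▸ Nat.dvd_add h1 hc)
      rw [ih (fun i hi => hf i (Finset.mem_insert_of_mem hi)) x.2 h2]
      ring
    · rw [hf a (Finset.mem_insert_self a s') x.1 h1]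
      ring

noncomputable def Gp (p : ℕ) : PowerSeries ℤ :=
  PowerSeries.mk fun n => coeff (R := ℤ) n (∏ i ∈ Finset.range (n+1), geo (p*(i+1)))

lemma geo_fac_dvd (p : ℕ) (hp : 1 ≤ p) :
    ∀ i, (X:PowerSeries ℤ)^(i+1) ∣ geo (p*(i+1)) - 1 := by
  intro i
  rw [geo_sub_one _ (by nlinarith)]
  exact Dvd.dvd.mul_right (pow_dvd_pow _ (by nlinarith)) _

lemma Gp_dvd (p n M : ℕ) (hp : 1 ≤ p) (hM : n+1 ≤ M) :
    (X:PowerSeries ℤ)^(n+1) ∣ Gp p - ∏ i ∈ Finset.range M, geo (p*(i+1)) := by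
  rw [PowerSeries.X_pow_dvd_iff]
  intro m hm
  rw [map_sub, Gp, coeff_mk]
  rw [coeff_prod_stable m _ (geo_fac_dvd p hp) (le_refl _)
    (Finset.range_subset_range.mpr (show m+1 ≤ M by omega))]
  ring

lemma Ep_Gp (p : ℕ) (hp : 1 ≤ p) : E p * Gp p = 1 := by
  ext n
  have hE := E_dvd p hp n (n+1) (le_refl _)
  have hG := Gp_dvd p n (n+1) hp (le_refl _)
  have h := coeff_eq_of_dvd (Nat.lt_succ_self n) (dvd_sub_mul_mul hE hG)
  rw [h, ← Finset.prod_mul_distrib]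
  have : ∏ i ∈ Finset.range (n+1), ((1 - (X:PowerSeries ℤ)^(p*(i+1))) * geo (p*(i+1)))
      = ∏ i ∈ Finset.range (n+1), (1 : PowerSeries ℤ) := by
    apply Finset.prod_congr rfl
    intro i _
    exact geo_mul _ (by nlinarith)
  rw [this, Finset.prod_const_one]

lemma Gp_nonneg (p n : ℕ) : 0 ≤ coeff (R := ℤ) n (Gp p) := by
  rw [Gp, coeff_mk]
  exact prod_coeff_nonneg _ _ (fun i _ m => geo_coeff_nonneg _ m) n

lemma Gp_support (p n : ℕ) (h : ¬ p ∣ n) : coeff (R := ℤ) n (Gp p) = 0 := by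
  rw [Gp, coeff_mk]
  apply prod_coeff_support p _ _ _ n h
  intro i _ m hm
  simp only [geo, coeff_mk]
  rw [if_neg]
  intro hc
  exact hm (dvd_trans (dvd_mul_right p (i+1)) hc)

lemma Gp_pos (p n : ℕ) (hp : 1 ≤ p) (h : p ∣ n) : 0 < coeff (R := ℤ) n (Gp p) := by
  rw [Gp, coeff_mk]
  rw [Finset.prod_range_succ' (fun i => geo (p*(i+1))) n]
  rw [PowerSeries.coeff_mul]
  apply Finset.sum_pos'
  · intro x _
    exact mul_nonneg (prod_coeff_nonneg _ _ (fun i _ m => geo_coeff_nonneg _ m) x.1)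
      (geo_coeff_nonneg _ x.2)
  · refine ⟨(0, n), Finset.HasAntidiagonal.mem_antidiagonal.mpr (by omega), ?_⟩
    have h1 : coeff (R := ℤ) 0 (∏ i ∈ Finset.range n, geo (p*(i+1+1))) = 1 := by
      rw [PowerSeries.coeff_zero_eq_constantCoeff_apply, map_prod]
      apply Finset.prod_eq_one
      intro i _
      rw [← PowerSeries.coeff_zero_eq_constantCoeff_apply]
      exact geo_const _
    have h2 : coeff (R := ℤ) n (geo (p*(0+1))) = 1 := by
      simp only [geo, coeff_mk]
      rw [if_pos (by simpa using h)]
    rw [h1, h2]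
    norm_num

lemma Tz_mod (p k : ℕ) (hodd : Odd p) :
    ((Tz ((k:ℕ):ℤ) : ℤ)) ≡ ((Tz (((k % p : ℕ)):ℤ) : ℤ)) [ZMOD (p:ℤ)] := by
  set x : ℤ := ((k % p : ℕ) : ℤ) with hx
  set y : ℤ := ((k / p : ℕ) : ℤ) with hy
  have hk : (k:ℤ) = x + (p:ℤ)*y := by
    have e1 : (k:ℤ) = ((p * (k/p) + (k % p) : ℕ) : ℤ) := by
      exact_mod_cast congrArg (Nat.cast : ℕ → ℤ) ((Nat.div_add_mod k p).symm : k = p*(k/p) + k % p)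
    have e2 : ((p * (k/p) + (k % p) : ℕ) : ℤ) = (p:ℤ) * ((k/p : ℕ) : ℤ) + ((k%p : ℕ):ℤ) := by
      rw [Nat.cast_add, Nat.cast_mul]
    rw [hx, hy, e1, e2]
    ring
  have h2T1 : 2*((Tz ((k:ℕ):ℤ)):ℤ) = (k:ℤ)*((k:ℤ)+1) := by
    have h := Tz_cast ((k:ℕ):ℤ)
    obtain ⟨u, hu⟩ := Int.even_mul_succ_self ((k:ℕ):ℤ)
    omega
  have h2T2 : 2*((Tz x):ℤ) = x*(x+1) := by
    have h := Tz_cast x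
    obtain ⟨u, hu⟩ := Int.even_mul_succ_self x
    omega
  have key : 2*(((Tz ((k:ℕ):ℤ)):ℤ) - ((Tz x):ℤ)) = (p:ℤ)*(y*((k:ℤ)+x+1)) := by
    linear_combination h2T1 - h2T2 + ((k:ℤ)+x+1)*hk
  have heven : (2:ℤ) ∣ y*((k:ℤ)+x+1) := by
    have h2 : (2:ℤ) ∣ (p:ℤ)*(y*((k:ℤ)+x+1)) := ⟨((Tz ((k:ℕ):ℤ)):ℤ) - ((Tz x):ℤ), by linarith⟩
    rcases (Int.Prime.dvd_mul' Nat.prime_two h2) with h|h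
    · exfalso
      obtain ⟨t, ht⟩ := hodd
      obtain ⟨s, hs⟩ := h
      have hpz : ((p:ℕ):ℤ) = 2*(t:ℤ)+1 := by exact_mod_cast congrArg (Nat.cast : ℕ → ℤ) ht
      omega
    · exact h
  obtain ⟨v, hv⟩ := heven
  have hfin : ((Tz x):ℤ) - ((Tz ((k:ℕ):ℤ)):ℤ) = (p:ℤ)*(-v) := by
    have h4 : 2*(((Tz ((k:ℕ):ℤ)):ℤ) - ((Tz x):ℤ)) = 2*((p:ℤ)*v) := by
      rw [key, hv]; ring
    have h3 : ((Tz ((k:ℕ):ℤ)):ℤ) - ((Tz x):ℤ) = (p:ℤ)*v := by linarith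
    linarith
  exact (Int.modEq_iff_dvd).mpr ⟨-v, hfin⟩

lemma psi_nonneg (m : ℕ) : 0 ≤ coeff (R := ℤ) m Psi := by
  rw [Psi, coeff_mk]
  split <;> norm_num

lemma psi_tri (r : ℕ) : coeff (R := ℤ) (Tz (r:ℤ)) Psi = 1 := by
  rw [Psi, coeff_mk, if_pos ⟨r, Tz_ge r, rfl⟩]

/-- Sign-pattern of the coefficients of `(q^2;q^2)_∞^2 / ((q;q)_∞ (q^p;q^p)_∞)`
for a prime `p ≥ 3`: beyond an explicit bound, coefficients are positive on
residues of triangular numbers mod `p` and zero elsewhere. -/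
theorem sign_pattern_E2_sq_div_E1_Ep
    (p : ℕ) (hp : p.Prime) (hp3 : 3 ≤ p)
    (a : ℕ → ℤ) (ha : PowerSeries.mk a * (E 1 * E p) = (E 2) ^ 2)
    (N : ℤ)
    (hN : N = sSup {m : ℤ | ∃ r₀ < p, m =
        sInf {k : ℤ | ∃ r < p, k = ((r : ℤ) * (r + 1)) / 2 ∧
          (((r : ℤ) * (r + 1)) / 2) % p = (((r₀ : ℤ) * (r₀ + 1)) / 2) % p}} - p) :
    ∀ n : ℕ, N < n →
      ((∃ r < p, (n : ℤ) ≡ ((r : ℤ) * (r + 1)) / 2 [ZMOD (p : ℤ)]) → 0 < a n) ∧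
      ((∀ r < p, ¬ (n : ℤ) ≡ ((r : ℤ) * (r + 1)) / 2 [ZMOD (p : ℤ)]) → a n = 0) := by
  intro n hn
  have hp1 : 1 ≤ p := by omega
  have hodd : Odd p := hp.odd_of_ne_two (by omega)
  have hE2 : E 1 * Psi = E 2 ^ 2 := gauss_identity
  have hE1ne : E 1 ≠ 0 := by
    intro h
    have hd := E_dvd 1 (le_refl 1) 0 1 (le_refl 1)
    have h0 := coeff_eq_of_dvd (show (0:ℕ) < 0+1 by omega) hd
    rw [h, Finset.prod_range_one, map_zero] at h0
    have : coeff (R := ℤ) 0 (1 - (X:PowerSeries ℤ)^(1*(0+1))) = 1 := by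
      rw [map_sub]
      simp [PowerSeries.coeff_one, PowerSeries.coeff_X_pow]
    rw [this] at h0
    exact absurd h0 (by norm_num)
  have hmkEp : PowerSeries.mk a * E p = Psi := by
    apply mul_left_cancel₀ hE1ne
    calc E 1 * (PowerSeries.mk a * E p) = PowerSeries.mk a * (E 1 * E p) := by ring
    _ = E 2 ^ 2 := ha
    _ = E 1 * Psi := hE2.symm
  have hmka : PowerSeries.mk a = Psi * Gp p := by
    calc PowerSeries.mk a = PowerSeries.mk a * (E p * Gp p) := by rw [Ep_Gp p hp1, mul_one]
    _ = (PowerSeries.mk a * E p) * Gp p := by ring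
    _ = Psi * Gp p := by rw [hmkEp]
  have han : a n = ∑ x ∈ Finset.HasAntidiagonal.antidiagonal n, coeff (R := ℤ) x.1 Psi * coeff (R := ℤ) x.2 (Gp p) := by
    rw [show a n = coeff (R := ℤ) n (PowerSeries.mk a) from (coeff_mk n a).symm, hmka,
      PowerSeries.coeff_mul]
  constructor
  · rintro ⟨r, hr, hmod⟩
    set S : Set ℤ := {k : ℤ | ∃ r' < p, k = ((r' : ℤ) * (r' + 1)) / 2 ∧
          (((r' : ℤ) * (r' + 1)) / 2) % p = (((r : ℤ) * (r + 1)) / 2) % p} with hSdef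
    have hSfin : S.Finite := by
      apply Set.Finite.subset
        (((Finset.range p).image (fun r' : ℕ => ((r' : ℤ) * ((r':ℤ) + 1)) / 2)).finite_toSet)
      rintro k ⟨r', hr', hkeq, _⟩
      exact Finset.mem_coe.mpr (Finset.mem_image.mpr ⟨r', Finset.mem_range.mpr hr', hkeq.symm⟩)
    have hSne : S.Nonempty := ⟨((r:ℤ)*((r:ℤ)+1))/2, r, hr, rfl, rfl⟩
    obtain ⟨rs, hrs, hrse, hrsmod⟩ := Set.Nonempty.csInf_mem hSne hSfin
    have hOfin : {m : ℤ | ∃ r₀ < p, m =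
        sInf {k : ℤ | ∃ r < p, k = ((r : ℤ) * (r + 1)) / 2 ∧
          (((r : ℤ) * (r + 1)) / 2) % p = (((r₀ : ℤ) * (r₀ + 1)) / 2) % p}}.Finite := by
      apply Set.Finite.subset
        (((Finset.range p).image (fun r₀ : ℕ => sInf {k : ℤ | ∃ r < p, k = ((r : ℤ) * (r + 1)) / 2 ∧
          (((r : ℤ) * (r + 1)) / 2) % p = (((r₀ : ℤ) * (r₀ + 1)) / 2) % p})).finite_toSet)
      rintro m ⟨r₀, hr₀, rfl⟩
      exact Finset.mem_coe.mpr (Finset.mem_image.mpr ⟨r₀, Finset.mem_range.mpr hr₀, rfl⟩)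
    have hle : sInf S ≤ sSup {m : ℤ | ∃ r₀ < p, m =
        sInf {k : ℤ | ∃ r < p, k = ((r : ℤ) * (r + 1)) / 2 ∧
          (((r : ℤ) * (r + 1)) / 2) % p = (((r₀ : ℤ) * (r₀ + 1)) / 2) % p}} :=
      le_csSup hOfin.bddAbove ⟨r, hr, rfl⟩
    set t : ℕ := Tz ((rs:ℕ):ℤ) with ht
    have hTz : sInf S = (t:ℤ) := hrse.trans (Tz_cast ((rs:ℕ):ℤ)).symm
    have hmod2 : (n:ℤ) ≡ (t:ℤ) [ZMOD (p:ℤ)] := by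
      have hrsm : ((rs : ℤ) * ((rs:ℤ) + 1)) / 2 ≡ ((r : ℤ) * ((r:ℤ) + 1)) / 2 [ZMOD (p:ℤ)] := hrsmod
      have := hmod.trans hrsm.symm
      rwa [show ((rs : ℤ) * ((rs:ℤ) + 1)) / 2 = (t:ℤ) from (Tz_cast ((rs:ℕ):ℤ)).symm] at this
    have hn' : sSup {m : ℤ | ∃ r₀ < p, m =
        sInf {k : ℤ | ∃ r < p, k = ((r : ℤ) * (r + 1)) / 2 ∧
          (((r : ℤ) * (r + 1)) / 2) % p = (((r₀ : ℤ) * (r₀ + 1)) / 2) % p}} - p < (n:ℤ) := by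
      rw [hN] at hn; exact hn
    rw [hTz] at hle
    have htlt : (t:ℤ) - p < (n:ℤ) := by linarith [hle, hn']
    have hdvd : (p:ℤ) ∣ (t:ℤ) - (n:ℤ) := hmod2.dvd
    have htn : t ≤ n := by
      by_contra hc
      push_neg at hc
      have hpos : (0:ℤ) < (t:ℤ) - n := by omega
      have := Int.le_of_dvd hpos hdvd
      omega
    have hpn : p ∣ (n - t : ℕ) := by
      have h1 : (p:ℤ) ∣ ((n:ℤ) - t) := by
        have := dvd_neg.mpr hdvd
        rwa [neg_sub] at this
      have h2 : (p:ℤ) ∣ (((n - t : ℕ)) : ℤ) := by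
        rwa [Nat.cast_sub htn]
      exact_mod_cast h2
    rw [han]
    apply Finset.sum_pos'
    · intro x _
      exact mul_nonneg (psi_nonneg x.1) (Gp_nonneg p x.2)
    · refine ⟨(t, n - t), Finset.HasAntidiagonal.mem_antidiagonal.mpr (by omega), ?_⟩
      have h1 : coeff (R := ℤ) t Psi = 1 := psi_tri rs
      have h2 := Gp_pos p (n - t) hp1 hpn
      rw [h1]
      linarith
  · intro hall
    rw [han]
    apply Finset.sum_eq_zero
    intro x hx
    have hxs : x.1 + x.2 = n := Finset.HasAntidiagonal.mem_antidiagonal.mp hx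
    by_cases hpsi : coeff (R := ℤ) x.1 Psi = 0
    · rw [hpsi, zero_mul]
    by_cases hg : coeff (R := ℤ) x.2 (Gp p) = 0
    · rw [hg, mul_zero]
    exfalso
    have hx1 : ∃ r' ≤ x.1, Tz ((r':ℕ):ℤ) = x.1 := by
      by_contra hc
      exact hpsi (by rw [Psi, coeff_mk, if_neg hc])
    obtain ⟨r', _, hr'⟩ := hx1
    have hpx2 : p ∣ x.2 := by
      by_contra hc
      exact hg (Gp_support p x.2 hc)
    apply hall (r' % p) (Nat.mod_lt r' (by omega))
    have h1 : (n:ℤ) ≡ ((Tz ((r':ℕ):ℤ) : ℕ) : ℤ) [ZMOD (p:ℤ)] := by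
      obtain ⟨w, hw⟩ := hpx2
      apply (Int.modEq_iff_dvd).mpr
      refine ⟨-(w:ℤ), ?_⟩
      have : ((Tz ((r':ℕ):ℤ) : ℕ) : ℤ) = (x.1 : ℤ) := by exact_mod_cast congrArg (Nat.cast : ℕ → ℤ) hr'
      rw [this]
      have hxn : (n:ℤ) = (x.1:ℤ) + (p:ℤ)*(w:ℤ) := by
        push_cast [← hxs, hw]
        ring
      rw [hxn]
      ring
    have h2 := Tz_mod p r' hodd
    have h3 := h1.trans h2
    rwa [Tz_cast (((r' % p : ℕ)):ℤ)] at h3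
end

section
/- Write (q;q)_∞⁴ / ((q²;q²)_∞² (q⁴;q⁴)_∞) = Σ_{n=0}^∞ a_n q^n. Then for every n ≥ 0: a_n > 0 if n ≡ 0 or 2 (mod 4); a_n < 0 if n ≡ 1 (mod 4); and a_n = 0 if n ≡ 3 (mod 4). -/
open PowerSeries

open Finset

namespace SP

/-- product of factors each ≡ 1 mod X^N is ≡ 1 -/
lemma prod_sub_one_dvd {N : ℕ} {s : Finset ℕ} {f : ℕ → PowerSeries ℤ}
    (hf : ∀ i ∈ s, (X : PowerSeries ℤ)^N ∣ (f i - 1)) :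
    (X : PowerSeries ℤ)^N ∣ (∏ i ∈ s, f i) - 1 := by
  classical
  induction s using Finset.induction with
  | empty => simp
  | @insert a s hx ih =>
    rw [Finset.prod_insert hx]
    have h1 : f a * ∏ i ∈ s, f i - 1
        = f a * ((∏ i ∈ s, f i) - 1) + (f a - 1) := by ring
    rw [h1]
    exact dvd_add (Dvd.dvd.mul_left (ih fun i hi => hf i (Finset.mem_insert_of_mem hi)) _)
      (hf a (Finset.mem_insert_self a s))

lemma dvd_mul_sub_mul {N : ℕ} {A B C D : PowerSeries ℤ}
    (h1 : (X : PowerSeries ℤ)^N ∣ A - B) (h2 : (X : PowerSeries ℤ)^N ∣ C - D) :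
    (X : PowerSeries ℤ)^N ∣ A * C - B * D := by
  have : A * C - B * D = A * (C - D) + (A - B) * D := by ring
  rw [this]
  exact dvd_add (h2.mul_left _) (h1.mul_right _)

lemma coeff_eq_of_dvd {N n : ℕ} {A B : PowerSeries ℤ} (h : (X : PowerSeries ℤ)^N ∣ A - B)
    (hn : n < N) : coeff n A = coeff n B := by
  rw [X_pow_dvd_iff] at h
  have := h n hn
  rw [map_sub, sub_eq_zero] at this
  exact this

lemma coeff_stab (e : ℕ → ℕ) (he : ∀ i, i < e i) (n : ℕ) (s : Finset ℕ)
    (hs : Finset.range (n+1) ⊆ s) :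
    coeff n (∏ i ∈ s, (1 - (X : PowerSeries ℤ)^(e i)))
      = coeff n (∏ i ∈ range (n+1), (1 - (X : PowerSeries ℤ)^(e i))) := by
  classical
  rw [← Finset.prod_sdiff hs]
  have hdvd : (X : PowerSeries ℤ)^(n+1) ∣ (∏ i ∈ s \ range (n+1), (1 - (X : PowerSeries ℤ)^(e i))) - 1 := by
    apply prod_sub_one_dvd
    intro i hi
    have hi' : n + 1 ≤ i := by
      have := (Finset.mem_sdiff.mp hi).2
      exact Nat.le_of_not_lt (by simpa [Finset.mem_range] using this)
    have : (1 : PowerSeries ℤ) - X^(e i) - 1 = -(X^(e i)) := by ring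
    rw [this]
    exact (pow_dvd_pow _ (by have := he i; omega)).neg_right
  have : coeff n ((∏ i ∈ s \ range (n+1), (1 - (X : PowerSeries ℤ)^(e i)))
      * ∏ i ∈ range (n+1), (1 - (X : PowerSeries ℤ)^(e i))
      - ∏ i ∈ range (n+1), (1 - (X : PowerSeries ℤ)^(e i))) = 0 := by
    have h2 : (X : PowerSeries ℤ)^(n+1) ∣ ((∏ i ∈ s \ range (n+1), (1 - (X : PowerSeries ℤ)^(e i))) - 1)
        * ∏ i ∈ range (n+1), (1 - (X : PowerSeries ℤ)^(e i)) := hdvd.mul_right _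
    rw [X_pow_dvd_iff] at h2
    have := h2 n (Nat.lt_succ_self n)
    rwa [sub_mul, one_mul] at this
  rw [map_sub, sub_eq_zero] at this
  exact this

instance : T2Space (PowerSeries ℤ) := by
  have : Topology.IsEmbedding (fun f => fun n => (PowerSeries.coeff n) f :
      PowerSeries ℤ → (ℕ → ℤ)) := by
    refine ⟨⟨rfl⟩, ?_⟩
    intro f g h
    ext n
    exact congrFun h n
  exact this.t2Space

lemma hasProd_one_sub_X_pow (e : ℕ → ℕ) (he : ∀ i, i < e i) :
    HasProd (fun i => (1 - (X : PowerSeries ℤ)^(e i)))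
      (PowerSeries.mk fun n => coeff n (∏ i ∈ range (n+1), (1 - (X : PowerSeries ℤ)^(e i)))) := by
  rw [HasProd, nhds_induced, Filter.tendsto_comap_iff]
  rw [show ((fun f => fun n => (PowerSeries.coeff n) f) ∘ (fun s : Finset ℕ =>
      ∏ i ∈ s, (1 - (X : PowerSeries ℤ)^(e i))))
    = fun s n => coeff n (∏ i ∈ s, (1 - (X : PowerSeries ℤ)^(e i))) from rfl]
  rw [tendsto_pi_nhds]
  intro n
  refine Filter.Tendsto.congr' ?_ tendsto_const_nhds
  filter_upwards [Filter.eventually_ge_atTop (range (n+1))] with s hs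
  simp only [coeff_mk]
  exact (coeff_stab e he n s hs).symm

lemma E_eq (k : ℕ) (hk : 0 < k) :
    _root_.E k = PowerSeries.mk fun n =>
      coeff n (∏ i ∈ range (n+1), (1 - (X : PowerSeries ℤ)^(k*(i+1)))) := by
  unfold _root_.E
  apply HasProd.tprod_eq
  exact hasProd_one_sub_X_pow (fun i => k*(i+1)) (fun i => by nlinarith)

lemma E_trunc (k : ℕ) (hk : 0 < k) (N : ℕ) :
    (X : PowerSeries ℤ)^N ∣ _root_.E k - ∏ i ∈ range N, (1 - (X : PowerSeries ℤ)^(k*(i+1))) := by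
  rw [X_pow_dvd_iff]
  intro m hm
  rw [map_sub, sub_eq_zero, E_eq k hk, coeff_mk]
  exact (coeff_stab (fun i => k*(i+1)) (fun i => by nlinarith) m (range N)
    (by intro x hx; simp only [Finset.mem_range] at *; omega)).symm

end SP
namespace SP

/-! ### Gaussian binomials in `X^2` and the finite Gauss identity -/

noncomputable def gb : ℕ → ℕ → PowerSeries ℤ
  | _, 0 => 1
  | 0, _+1 => 0
  | m+1, k+1 => gb m k + X^(2*(k+1)) * gb m (k+1)

lemma gb_zero (m : ℕ) : gb m 0 = 1 := by cases m <;> rfl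

lemma gb_zero_succ (k : ℕ) : gb 0 (k+1) = 0 := rfl

lemma gb_succ (m k : ℕ) : gb (m+1) (k+1) = gb m k + X^(2*(k+1)) * gb m (k+1) := rfl

lemma gb_eq_zero : ∀ m k : ℕ, m < k → gb m k = 0 := by
  intro m
  induction m with
  | zero =>
    intro k hk
    match k, hk with
    | k+1, _ => rfl
  | succ m ih =>
    intro k hk
    match k, hk with
    | k+1, hk =>
      rw [gb_succ, ih k (by omega), ih (k+1) (by omega)]
      ring

lemma gb_self : ∀ m : ℕ, gb m m = 1 := by
  intro m
  induction m with
  | zero => rfl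
  | succ m ih => rw [gb_succ, ih, gb_eq_zero m (m+1) (by omega)]; ring

lemma gb_one : ∀ m : ℕ, gb m 1 = ∑ j ∈ Finset.range m, X^(2*j) := by
  intro m
  induction m with
  | zero =>
    rw [show (1:ℕ) = 0 + 1 from rfl, gb_zero_succ, Finset.range_zero, Finset.sum_empty]
  | succ m ih =>
    rw [show (1:ℕ) = 0 + 1 from rfl] at ih ⊢
    rw [gb_succ, gb_zero, ih, Finset.sum_range_succ', Finset.mul_sum]
    simp only [Nat.mul_zero, pow_zero]
    rw [add_comm]
    congr 1
    apply Finset.sum_congr rfl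
    intro j _
    rw [← pow_add]
    congr 1
    ring

lemma gb_rec2 : ∀ m k l : ℕ, k + l = m → gb (m+1) (k+1) = X^(2*l) * gb m k + gb m (k+1) := by
  intro m
  induction m with
  | zero =>
    intro k l h
    obtain ⟨rfl, rfl⟩ : k = 0 ∧ l = 0 := ⟨by omega, by omega⟩
    simp [gb_succ, gb_zero, gb_zero_succ]
  | succ m ih =>
    intro k l h
    match k with
    | 0 =>
      have hl : l = m + 1 := by omega
      subst hl
      rw [gb_zero, gb_one (m+2), gb_one (m+1), Finset.sum_range_succ]
      ring
    | k'+1 =>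
      match l with
      | 0 =>
        have hk : k' = m := by omega
        subst hk
        rw [gb_succ, gb_self, gb_eq_zero (k'+1) (k'+2) (by omega)]
        ring
      | l'+1 =>
        have h1 : k' + (l'+1) = m := by omega
        have h2 : (k'+1) + l' = m := by omega
        conv_lhs => rw [gb_succ, ih k' (l'+1) h1, ih (k'+1) l' h2]
        conv_rhs => rw [gb_succ, gb_succ]
        ring

lemma gb_symm : ∀ m k l : ℕ, k + l = m → gb m k = gb m l := by
  intro m
  induction m with
  | zero =>
    intro k l h
    obtain ⟨rfl, rfl⟩ : k = 0 ∧ l = 0 := ⟨by omega, by omega⟩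
    rfl
  | succ m ih =>
    intro k l h
    match k with
    | 0 =>
      have hl : l = m+1 := by omega
      subst hl
      rw [gb_zero, gb_self]
    | k'+1 =>
      match l with
      | 0 =>
        have hk : k' = m := by omega
        subst hk
        rw [gb_zero, gb_self]
      | l'+1 =>
        have h1 : k' + (l'+1) = m := by omega
        have h2 : l' + (k'+1) = m := by omega
        conv_lhs => rw [gb_succ]
        conv_rhs => rw [gb_rec2 m l' (k'+1) h2]
        rw [ih k' (l'+1) h1, ih (k'+1) l' (by omega)]
        ring

/-- `D r = (q^2;q^2)_r` -/
noncomputable def D (r : ℕ) : PowerSeries ℤ := ∏ j ∈ Finset.range r, (1 - X^(2*(j+1)))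

/-- `P r = (q;q^2)_r` -/
noncomputable def Pp (r : ℕ) : PowerSeries ℤ := ∏ j ∈ Finset.range r, (1 - X^(2*j+1))

lemma D_zero : D 0 = 1 := by simp [D]

lemma D_succ (r : ℕ) : D (r+1) = D r * (1 - X^(2*(r+1))) := Finset.prod_range_succ _ _

lemma Pp_succ (r : ℕ) : Pp (r+1) = Pp r * (1 - X^(2*r+1)) := Finset.prod_range_succ _ _

lemma gb_mul_D : ∀ m k l : ℕ, k + l = m → gb m k * D k * D l = D m := by
  intro m
  induction m with
  | zero =>
    intro k l h
    obtain ⟨rfl, rfl⟩ : k = 0 ∧ l = 0 := ⟨by omega, by omega⟩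
    simp [gb_zero, D_zero]
  | succ m ih =>
    intro k l h
    match k with
    | 0 =>
      have hl : l = m+1 := by omega
      subst hl
      rw [gb_zero, D_zero]
      ring
    | k'+1 =>
      match l with
      | 0 =>
        have hk : k' = m := by omega
        subst hk
        rw [gb_self, D_zero]
        ring
      | l'+1 =>
        have hm : m = k' + l' + 1 := by omega
        subst hm
        have ih1 := ih k' (l'+1) (by omega)
        have ih2 := ih (k'+1) l' (by omega)
        rw [D_succ l'] at ih1
        rw [D_succ k'] at ih2
        rw [gb_succ, D_succ k', D_succ l', D_succ (k'+l'+1)]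
        linear_combination (1 - (X:PowerSeries ℤ)^(2*(k'+1))) * ih1
          + (X:PowerSeries ℤ)^(2*(k'+1)) * (1 - (X:PowerSeries ℤ)^(2*(l'+1))) * ih2

end SP
namespace SP

/-! ### bilateral sums -/

def dd (c j : ℕ) : ℕ := (c - j) + (j - c)

lemma dd_succ (c j : ℕ) : dd (c+1) (j+1) = dd c j := by unfold dd; omega

lemma dd_sq_succ (m j : ℕ) : dd (m+1) j ^ 2 + 2*j = dd m j ^2 + (2*m+1) := by
  rcases le_or_gt j m with h | h
  · obtain ⟨t, rfl⟩ : ∃ t, m = j + t := ⟨m - j, by omega⟩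
    have h1 : dd (j+t+1) j = t+1 := by unfold dd; omega
    have h2 : dd (j+t) j = t := by unfold dd; omega
    rw [h1, h2]; ring
  · obtain ⟨u, rfl⟩ : ∃ u, j = m + (u+1) := ⟨j - m - 1, by omega⟩
    have h1 : dd (m+1) (m+(u+1)) = u := by unfold dd; omega
    have h2 : dd m (m+(u+1)) = u+1 := by unfold dd; omega
    rw [h1, h2]; ring

noncomputable def T (row c sg : ℕ) : PowerSeries ℤ :=
  ∑ j ∈ Finset.range (row+1), ((-1 : PowerSeries ℤ))^(sg+j) * X^(dd c j ^2) * gb row j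

lemma shift_sum (f : ℕ → PowerSeries ℤ) (R : ℕ) (hf : f (R+1) = 0) :
    ∑ j ∈ Finset.range (R+1), f (j+1) = (∑ j ∈ Finset.range (R+1), f j) - f 0 := by
  have h := Finset.sum_range_succ' f (R+1)
  have h2 := Finset.sum_range_succ f (R+1)
  linear_combination h2 - h + hf

lemma sum_gb_step (R : ℕ) (c : ℕ → PowerSeries ℤ) :
    ∑ j ∈ Finset.range (R+2), c j * gb (R+1) j
      = ∑ j ∈ Finset.range (R+1), (c (j+1) + c j * X^(2*j)) * gb R j := by
  have h0 : ∑ j ∈ Finset.range (R+2), c j * gb (R+1) j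
      = (∑ j ∈ Finset.range (R+1), c (j+1) * gb (R+1) (j+1)) + c 0 * gb (R+1) 0 :=
    Finset.sum_range_succ' _ _
  have h1 : ∀ j ∈ Finset.range (R+1), c (j+1) * gb (R+1) (j+1)
      = c (j+1) * gb R j + (fun i => c i * X^(2*i) * gb R i) (j+1) := by
    intro j _
    simp only []
    rw [gb_succ]
    ring
  have h2 : (fun i => c i * X^(2*i) * gb R i) (R+1) = 0 := by
    simp only []
    rw [gb_eq_zero R (R+1) (by omega)]
    ring
  have h3 : ∀ j ∈ Finset.range (R+1), (c (j+1) + c j * X^(2*j)) * gb R j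
      = c (j+1) * gb R j + (fun i => c i * X^(2*i) * gb R i) j := by
    intro j _
    simp only []
    ring
  rw [h0, Finset.sum_congr rfl h1, Finset.sum_add_distrib,
    shift_sum (fun i => c i * X^(2*i) * gb R i) R h2,
    Finset.sum_congr rfl h3, Finset.sum_add_distrib]
  simp only [gb_zero]
  ring

lemma expandA (m : ℕ) : T (2*m+2) (m+1) (m+1) = -(1 - X^(2*m+1)) * T (2*m+1) m (m+1) := by
  have step := sum_gb_step (2*m+1) (fun j => ((-1 : PowerSeries ℤ))^(m+1+j) * X^(dd (m+1) j ^2))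
  have h1 : ∀ j ∈ Finset.range (2*m+2),
      ((fun j => ((-1 : PowerSeries ℤ))^(m+1+j) * X^(dd (m+1) j ^2)) (j+1)
        + (fun j => ((-1 : PowerSeries ℤ))^(m+1+j) * X^(dd (m+1) j ^2)) j * X^(2*j)) * gb (2*m+1) j
      = -(1 - X^(2*m+1)) * (((-1 : PowerSeries ℤ))^(m+1+j) * X^(dd m j ^2) * gb (2*m+1) j) := by
    intro j _
    simp only []
    have hx : (X : PowerSeries ℤ)^(dd (m+1) j ^2) * X^(2*j) = X^(dd m j ^2) * X^(2*m+1) := by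
      rw [← pow_add, ← pow_add]
      congr 1
      have := dd_sq_succ m j
      omega
    rw [dd_succ m j]
    linear_combination ((-1 : PowerSeries ℤ))^(m+1+j) * gb (2*m+1) j * hx
  calc T (2*m+2) (m+1) (m+1)
      = ∑ j ∈ Finset.range (2*m+2),
        ((fun j => ((-1 : PowerSeries ℤ))^(m+1+j) * X^(dd (m+1) j ^2)) (j+1)
          + (fun j => ((-1 : PowerSeries ℤ))^(m+1+j) * X^(dd (m+1) j ^2)) j * X^(2*j)) * gb (2*m+1) j := step
    _ = ∑ j ∈ Finset.range (2*m+2),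
        -(1 - X^(2*m+1)) * (((-1 : PowerSeries ℤ))^(m+1+j) * X^(dd m j ^2) * gb (2*m+1) j) :=
      Finset.sum_congr rfl h1
    _ = -(1 - X^(2*m+1)) * T (2*m+1) m (m+1) := (Finset.mul_sum _ _ _).symm

lemma expandB (m : ℕ) : T (2*m+2) (m+2) (m+1) = -(1 - X^(2*m+3)) * T (2*m+1) (m+1) (m+1) := by
  have step := sum_gb_step (2*m+1) (fun j => ((-1 : PowerSeries ℤ))^(m+1+j) * X^(dd (m+2) j ^2))
  have h1 : ∀ j ∈ Finset.range (2*m+2),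
      ((fun j => ((-1 : PowerSeries ℤ))^(m+1+j) * X^(dd (m+2) j ^2)) (j+1)
        + (fun j => ((-1 : PowerSeries ℤ))^(m+1+j) * X^(dd (m+2) j ^2)) j * X^(2*j)) * gb (2*m+1) j
      = -(1 - X^(2*m+3)) * (((-1 : PowerSeries ℤ))^(m+1+j) * X^(dd (m+1) j ^2) * gb (2*m+1) j) := by
    intro j _
    simp only []
    have hx : (X : PowerSeries ℤ)^(dd (m+2) j ^2) * X^(2*j) = X^(dd (m+1) j ^2) * X^(2*m+3) := by
      rw [← pow_add, ← pow_add]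
      congr 1
      have h := dd_sq_succ (m+1) j
      simp only [show m+1+1 = m+2 from rfl] at h
      omega
    rw [dd_succ (m+1) j]
    linear_combination ((-1 : PowerSeries ℤ))^(m+1+j) * gb (2*m+1) j * hx
  calc T (2*m+2) (m+2) (m+1)
      = ∑ j ∈ Finset.range (2*m+2),
        ((fun j => ((-1 : PowerSeries ℤ))^(m+1+j) * X^(dd (m+2) j ^2)) (j+1)
          + (fun j => ((-1 : PowerSeries ℤ))^(m+1+j) * X^(dd (m+2) j ^2)) j * X^(2*j)) * gb (2*m+1) j := step
    _ = ∑ j ∈ Finset.range (2*m+2),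
        -(1 - X^(2*m+3)) * (((-1 : PowerSeries ℤ))^(m+1+j) * X^(dd (m+1) j ^2) * gb (2*m+1) j) :=
      Finset.sum_congr rfl h1
    _ = -(1 - X^(2*m+3)) * T (2*m+1) (m+1) (m+1) := (Finset.mul_sum _ _ _).symm

lemma expandU (m : ℕ) : T (2*m+3) (m+1) (m+2) = (1 - X^(2*m+1)) * T (2*m+2) m (m+1) := by
  have step := sum_gb_step (2*m+2) (fun j => ((-1 : PowerSeries ℤ))^(m+2+j) * X^(dd (m+1) j ^2))
  have h1 : ∀ j ∈ Finset.range (2*m+3),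
      ((fun j => ((-1 : PowerSeries ℤ))^(m+2+j) * X^(dd (m+1) j ^2)) (j+1)
        + (fun j => ((-1 : PowerSeries ℤ))^(m+2+j) * X^(dd (m+1) j ^2)) j * X^(2*j)) * gb (2*m+2) j
      = (1 - X^(2*m+1)) * (((-1 : PowerSeries ℤ))^(m+1+j) * X^(dd m j ^2) * gb (2*m+2) j) := by
    intro j _
    simp only []
    have hx : (X : PowerSeries ℤ)^(dd (m+1) j ^2) * X^(2*j) = X^(dd m j ^2) * X^(2*m+1) := by
      rw [← pow_add, ← pow_add]
      congr 1
      have := dd_sq_succ m j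
      omega
    rw [dd_succ m j]
    linear_combination ((-1 : PowerSeries ℤ))^(m+2+j) * gb (2*m+2) j * hx
  calc T (2*m+3) (m+1) (m+2)
      = ∑ j ∈ Finset.range (2*m+3),
        ((fun j => ((-1 : PowerSeries ℤ))^(m+2+j) * X^(dd (m+1) j ^2)) (j+1)
          + (fun j => ((-1 : PowerSeries ℤ))^(m+2+j) * X^(dd (m+1) j ^2)) j * X^(2*j)) * gb (2*m+2) j := step
    _ = ∑ j ∈ Finset.range (2*m+3),
        (1 - X^(2*m+1)) * (((-1 : PowerSeries ℤ))^(m+1+j) * X^(dd m j ^2) * gb (2*m+2) j) :=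
      Finset.sum_congr rfl h1
    _ = (1 - X^(2*m+1)) * T (2*m+2) m (m+1) := (Finset.mul_sum _ _ _).symm

lemma neg_one_pow_odd {a b M : ℕ} (h : a + b = 2*M+1) : ((-1 : PowerSeries ℤ))^a = -(-1)^b := by
  have h1 : ((-1 : PowerSeries ℤ))^a * (-1)^b = -1 := by
    rw [← pow_add, h, pow_succ, pow_mul]
    norm_num
  have hb : ((-1 : PowerSeries ℤ))^b * (-1)^b = 1 := by
    rw [← pow_add, ← two_mul, pow_mul]
    norm_num
  calc ((-1 : PowerSeries ℤ))^a = (-1)^a * ((-1)^b * (-1)^b) := by rw [hb, mul_one]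
    _ = ((-1)^a * (-1)^b) * (-1)^b := by ring
    _ = -(-1)^b := by rw [h1]; ring

lemma neg_one_pow_even {a b M : ℕ} (h : a + b = 2*M) : ((-1 : PowerSeries ℤ))^a = (-1)^b := by
  have h1 : ((-1 : PowerSeries ℤ))^a * (-1)^b = 1 := by
    rw [← pow_add, h, pow_mul]
    norm_num
  have hb : ((-1 : PowerSeries ℤ))^b * (-1)^b = 1 := by
    rw [← pow_add, ← two_mul, pow_mul]
    norm_num
  calc ((-1 : PowerSeries ℤ))^a = (-1)^a * ((-1)^b * (-1)^b) := by rw [hb, mul_one]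
    _ = ((-1)^a * (-1)^b) * (-1)^b := by ring
    _ = (-1)^b := by rw [h1]; ring

lemma mirror_odd (m : ℕ) : T (2*m+1) (m+1) (m+1) = - T (2*m+1) m (m+1) := by
  simp only [T]
  conv_lhs => rw [← Finset.sum_range_reflect]
  rw [← Finset.sum_neg_distrib]
  apply Finset.sum_congr rfl
  intro j hj
  have hj' : j ≤ 2*m+1 := by simpa [Nat.lt_succ_iff] using Finset.mem_range.mp hj
  have hd : dd (m+1) (2*m+1+1-1-j) = dd m j := by unfold dd; omega
  rw [gb_symm (2*m+1) (2*m+1+1-1-j) j (by omega), hd,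
    neg_one_pow_odd (show (m+1+(2*m+1+1-1-j)) + (m+1+j) = 2*(2*m+1)+1 from by omega)]
  ring

lemma mirror_even (m : ℕ) : T (2*m+2) m (m+1) = T (2*m+2) (m+2) (m+1) := by
  simp only [T]
  conv_lhs => rw [← Finset.sum_range_reflect]
  apply Finset.sum_congr rfl
  intro j hj
  have hj' : j ≤ 2*m+2 := by simpa [Nat.lt_succ_iff] using Finset.mem_range.mp hj
  have hd : dd m (2*m+2+1-1-j) = dd (m+2) j := by unfold dd; omega
  rw [gb_symm (2*m+2) (2*m+2+1-1-j) j (by omega), hd,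
    neg_one_pow_even (show (m+1+(2*m+2+1-1-j)) + (m+1+j) = 2*(2*m+2) from by omega)]

/-- key induction: `U' m = T (2m+1) m (m+1) = -(P m)^2 (1 - X^{2m+1})` -/
lemma Up_eq : ∀ m : ℕ, T (2*m+1) m (m+1) = -(Pp m ^2) * (1 - X^(2*m+1)) := by
  intro m
  induction m with
  | zero =>
    show T 1 0 1 = _
    rw [T]
    rw [Finset.sum_range_succ, Finset.sum_range_succ, Finset.sum_range_zero]
    have h0 : dd 0 0 = 0 := by unfold dd; omega
    have h1 : dd 0 1 = 1 := by unfold dd; omega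
    rw [h0, h1, gb_zero, gb_self, Pp]
    norm_num
    ring
  | succ m ih =>
    have e1 : T (2*(m+1)+1) (m+1) (m+1+1) = (1 - X^(2*m+1)) * T (2*m+2) m (m+1) := by
      rw [show 2*(m+1)+1 = 2*m+3 from by ring, show m+1+1 = m+2 from by ring]
      exact expandU m
    rw [e1, mirror_even m, expandB m, mirror_odd m, ih]
    rw [show Pp (m+1) = Pp m * (1 - X^(2*m+1)) from Pp_succ m,
      show (2*(m+1)+1 : ℕ) = 2*m+3 from by ring]
    ring

lemma finite_gauss : ∀ m : ℕ, T (2*m) m m = Pp m ^ 2 := by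
  intro m
  cases m with
  | zero =>
    rw [T]
    rw [show 2*0+1 = 1 from rfl, Finset.sum_range_succ, Finset.sum_range_zero]
    have h0 : dd 0 0 = 0 := by unfold dd; omega
    rw [h0, gb_zero, Pp]
    norm_num
  | succ m =>
    rw [show 2*(m+1) = 2*m+2 from by ring, show m+1 = m+1 from rfl]
    rw [expandA m, Up_eq m, Pp_succ m]
    ring

end SP
namespace SP

/-! ### the theta series -/

def sth (n : ℕ) : ℤ := if Nat.sqrt n * Nat.sqrt n = n then (if n = 0 then 1 else 2) else 0

noncomputable def Th : PowerSeries ℤ := PowerSeries.mk fun n => (-1)^n * sth n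

noncomputable def Tth (m : ℕ) : PowerSeries ℤ :=
  ∑ j ∈ Finset.range (2*m+1), (C ((-1 : ℤ)^(m+j))) * X^(dd m j ^2)

lemma neg_one_pow_odd' {R : Type*} [CommRing R] {a b M : ℕ} (h : a + b = 2*M+1) :
    ((-1 : R))^a = -(-1)^b := by
  have h1 : ((-1 : R))^a * (-1)^b = -1 := by
    rw [← pow_add, h, pow_succ, pow_mul]
    norm_num
  have hb : ((-1 : R))^b * (-1)^b = 1 := by
    rw [← pow_add, ← two_mul, pow_mul]
    norm_num
  calc ((-1 : R))^a = (-1)^a * ((-1)^b * (-1)^b) := by rw [hb, mul_one]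
    _ = ((-1)^a * (-1)^b) * (-1)^b := by ring
    _ = -(-1)^b := by rw [h1]; ring

lemma neg_one_pow_even' {R : Type*} [CommRing R] {a b M : ℕ} (h : a + b = 2*M) :
    ((-1 : R))^a = (-1)^b := by
  have h1 : ((-1 : R))^a * (-1)^b = 1 := by
    rw [← pow_add, h, pow_mul]
    norm_num
  have hb : ((-1 : R))^b * (-1)^b = 1 := by
    rw [← pow_add, ← two_mul, pow_mul]
    norm_num
  calc ((-1 : R))^a = (-1)^a * ((-1)^b * (-1)^b) := by rw [hb, mul_one]
    _ = ((-1)^a * (-1)^b) * (-1)^b := by ring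
    _ = (-1)^b := by rw [h1]; ring

lemma even_sq_add_self (t : ℕ) : Even (t*t + t) := by
  have h := Nat.even_mul_succ_self t
  rwa [Nat.mul_succ] at h

lemma coeff_Tth (m i : ℕ) (hi : i < m) : coeff i (Tth m) = (-1)^i * sth i := by
  classical
  rw [Tth, map_sum]
  simp only [coeff_C_mul_X_pow]
  by_cases hsq : Nat.sqrt i * Nat.sqrt i = i
  · have htm : Nat.sqrt i < m := lt_of_le_of_lt (Nat.sqrt_le_self i) hi
    rcases Nat.eq_zero_or_pos (Nat.sqrt i) with ht0 | ht0
    · -- i = 0, single term at j = m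
      have hi0 : i = 0 := by rw [ht0] at hsq; omega
      subst hi0
      rw [Finset.sum_eq_single m]
      · have hdm : dd m m = 0 := by unfold dd; omega
        rw [hdm, if_pos (by norm_num : (0:ℕ) = 0^2),
          neg_one_pow_even' (a := m + m) (b := 0) (M := m) (by ring)]
        simp [sth]
      · intro j hj hjm
        apply if_neg
        have : dd m j ≠ 0 := by unfold dd; omega
        simp only [pow_two]
        intro hc
        rcases Nat.mul_eq_zero.mp (by omega : dd m j * dd m j = 0) with h | h <;> exact this h
      · intro h
        exact absurd (Finset.mem_range.mpr (by omega)) h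
    · -- two terms at m - t and m + t
      have hne : m - Nat.sqrt i ≠ m + Nat.sqrt i := by omega
      have hsub : ({m - Nat.sqrt i, m + Nat.sqrt i} : Finset ℕ) ⊆ Finset.range (2*m+1) := by
        intro x hx
        simp only [Finset.mem_insert, Finset.mem_singleton] at hx
        rcases hx with rfl | rfl <;> simp only [Finset.mem_range] <;> omega
      rw [← Finset.sum_subset hsub]
      · rw [Finset.sum_pair hne]
        have hd1 : dd m (m - Nat.sqrt i) = Nat.sqrt i := by unfold dd; omega
        have hd2 : dd m (m + Nat.sqrt i) = Nat.sqrt i := by unfold dd; omega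
        have hit : i = Nat.sqrt i ^2 := by rw [pow_two]; omega
        have hipos : 0 < i := by
          have : 0 < Nat.sqrt i * Nat.sqrt i := Nat.mul_pos ht0 ht0
          omega
        obtain ⟨v, hv⟩ := even_sq_add_self (Nat.sqrt i)
        have hs1 : ((-1 : ℤ))^(m + (m - Nat.sqrt i)) = (-1)^i := by
          apply neg_one_pow_even' (M := v + (m - Nat.sqrt i))
          omega
        have hs2 : ((-1 : ℤ))^(m + (m + Nat.sqrt i)) = (-1)^i := by
          apply neg_one_pow_even' (M := v + m)
          omega
        rw [hd1, hd2, if_pos hit, if_pos hit, hs1, hs2, sth, if_pos hsq,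
          if_neg (by omega)]
        ring
      · intro j hj hjnot
        simp only [Finset.mem_insert, Finset.mem_singleton] at hjnot
        push_neg at hjnot
        apply if_neg
        intro h
        have h2 : dd m j = Nat.sqrt i := by
          have h3 : Nat.sqrt i = dd m j := by rw [h, pow_two, Nat.sqrt_eq]
          omega
        unfold dd at h2
        omega
  · -- not a square: everything vanishes
    rw [Finset.sum_eq_zero, sth, if_neg hsq, mul_zero]
    intro j hj
    apply if_neg
    intro h
    apply hsq
    have : Nat.sqrt i = dd m j := by rw [h, pow_two, Nat.sqrt_eq]
    rw [this, ← pow_two]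
    omega

lemma theta_trunc (n : ℕ) : (X : PowerSeries ℤ)^(n+1) ∣ Th - Tth (n+1) := by
  rw [X_pow_dvd_iff]
  intro i hi
  rw [map_sub, sub_eq_zero, Th, coeff_mk, coeff_Tth (n+1) i (by omega)]

end SP
namespace SP

lemma D_congr {N a b : ℕ} (hba : b ≤ a) (hN : N ≤ 2*(b+1)) :
    (X : PowerSeries ℤ)^N ∣ D a - D b := by
  obtain ⟨c, rfl⟩ : ∃ c, a = b + c := ⟨a - b, by omega⟩
  have hT : (X : PowerSeries ℤ)^N ∣ (∏ i ∈ Finset.range c, (1 - X^(2*(b+i+1)))) - 1 := by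
    apply prod_sub_one_dvd
    intro i _
    rw [show (1 : PowerSeries ℤ) - X^(2*(b+i+1)) - 1 = -(X^(2*(b+i+1))) from by ring]
    exact (pow_dvd_pow X (by omega)).neg_right
  have key : D (b+c) - D b = D b * ((∏ i ∈ Finset.range c, (1 - X^(2*(b+i+1)))) - 1) := by
    rw [D, D, Finset.prod_range_add]
    ring
  rw [key]
  exact hT.mul_left _

lemma QPD : ∀ M : ℕ, (∏ i ∈ Finset.range (2*M), (1 - (X : PowerSeries ℤ)^(i+1))) = Pp M * D M := by
  intro M
  induction M with
  | zero => simp [Pp, D]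
  | succ M ih =>
    rw [show 2*(M+1) = (2*M+1)+1 from by ring, Finset.prod_range_succ, Finset.prod_range_succ,
      ih, Pp_succ, D_succ]
    rw [show 2*M+1+1 = 2*(M+1) from by ring]
    ring

lemma Tth_eq (m : ℕ) : Tth m
    = ∑ j ∈ Finset.range (2*m+1), ((-1 : PowerSeries ℤ))^(m+j) * X^(dd m j ^2) := by
  rw [Tth]
  apply Finset.sum_congr rfl
  intro j _
  rw [map_pow, map_neg, map_one]

lemma Kdvd (n : ℕ) : (X : PowerSeries ℤ)^(n+1) ∣
    Tth (n+1) * D (2*(n+1)) - T (2*(n+1)) (n+1) (n+1) * (D (n+1) * D (n+1)) := by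
  rw [Tth_eq, T, Finset.sum_mul, Finset.sum_mul, ← Finset.sum_sub_distrib]
  apply Finset.dvd_sum
  intro j hj
  have hj' : j ≤ 2*(n+1) := by
    have := Finset.mem_range.mp hj
    omega
  have hfac : ((-1 : PowerSeries ℤ))^(n+1+j) * X^(dd (n+1) j ^2) * D (2*(n+1))
      - ((-1 : PowerSeries ℤ))^(n+1+j) * X^(dd (n+1) j ^2) * gb (2*(n+1)) j * (D (n+1) * D (n+1))
      = ((-1 : PowerSeries ℤ))^(n+1+j) * X^(dd (n+1) j ^2)
        * (D (2*(n+1)) - gb (2*(n+1)) j * (D (n+1) * D (n+1))) := by ring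
  rw [hfac]
  by_cases he : dd (n+1) j ^2 ≤ n
  · -- main case
    apply Dvd.dvd.mul_left
    have ht : dd (n+1) j ≤ n + 1 := by
      by_contra hc
      push_neg at hc
      have : (n+2)^2 ≤ dd (n+1) j ^2 := Nat.pow_le_pow_left (by omega) 2
      have h4 : (n+2)^2 = n*n+4*n+4 := by ring
      omega
    have h2t : n+1 ≤ 2*((n+1 - dd (n+1) j)+1) := by
      rcases le_or_gt (dd (n+1) j) 1 with h1 | h1
      · omega
      · have : 2 * dd (n+1) j ≤ dd (n+1) j * dd (n+1) j := by
          exact Nat.mul_le_mul_right _ h1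
        have hsq : dd (n+1) j * dd (n+1) j = dd (n+1) j ^2 := by ring
        omega
    have hb1 : n+1 - dd (n+1) j ≤ j := by unfold dd at *; omega
    have hb2 : n+1 - dd (n+1) j ≤ 2*(n+1) - j := by unfold dd at *; omega
    have hb3 : n+1 - dd (n+1) j ≤ n+1 := by omega
    have hD1 := D_congr hb1 h2t
    have hD2 := D_congr hb2 h2t
    have hD3 := D_congr hb3 h2t
    have hprod1 := dvd_mul_sub_mul hD1 hD2
    have hprod2 := dvd_mul_sub_mul hD3 hD3
    have hsub := dvd_sub hprod1 hprod2
    rw [sub_sub_sub_cancel_right] at hsub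
    have gbD : gb (2*(n+1)) j * D j * D (2*(n+1) - j) = D (2*(n+1)) :=
      gb_mul_D (2*(n+1)) j (2*(n+1) - j) (by omega)
    rw [← gbD, show gb (2*(n+1)) j * D j * D (2*(n+1) - j)
        - gb (2*(n+1)) j * (D (n+1) * D (n+1))
        = gb (2*(n+1)) j * (D j * D (2*(n+1) - j) - D (n+1) * D (n+1)) from by ring]
    exact hsub.mul_left _
  · -- exponent too large
    push_neg at he
    have : (X : PowerSeries ℤ)^(n+1) ∣ X^(dd (n+1) j ^2) := pow_dvd_pow X (by omega)
    rw [show ((-1 : PowerSeries ℤ))^(n+1+j) * X^(dd (n+1) j ^2)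
        * (D (2*(n+1)) - gb (2*(n+1)) j * (D (n+1) * D (n+1)))
        = X^(dd (n+1) j ^2) * (((-1 : PowerSeries ℤ))^(n+1+j)
          * (D (2*(n+1)) - gb (2*(n+1)) j * (D (n+1) * D (n+1)))) from by ring]
    exact this.mul_right _

theorem gauss : Th * E 2 = (_root_.E 1)^2 := by
  apply PowerSeries.ext
  intro n
  have hE2 : (X : PowerSeries ℤ)^(n+1) ∣ _root_.E 2 - D (2*(n+1)) :=
    (pow_dvd_pow X (by omega : n+1 ≤ 2*(n+1))).trans (E_trunc 2 (by norm_num) (2*(n+1)))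
  have hE1 : (X : PowerSeries ℤ)^(n+1) ∣ _root_.E 1 - (Pp (n+1) * D (n+1)) := by
    have h := E_trunc 1 (by norm_num) (2*(n+1))
    simp only [one_mul] at h
    rw [QPD (n+1)] at h
    exact (pow_dvd_pow X (by omega : n+1 ≤ 2*(n+1))).trans h
  have hTh : (X : PowerSeries ℤ)^(n+1) ∣ Th - Tth (n+1) := theta_trunc n
  have h1 := dvd_mul_sub_mul hTh hE2
  have h2 : (X : PowerSeries ℤ)^(n+1) ∣ (_root_.E 1)^2 - (Pp (n+1) * D (n+1))^2 := by
    rw [pow_two, pow_two]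
    exact dvd_mul_sub_mul hE1 hE1
  calc coeff n (Th * _root_.E 2)
      = coeff n (Tth (n+1) * D (2*(n+1))) := coeff_eq_of_dvd h1 (by omega)
    _ = coeff n (T (2*(n+1)) (n+1) (n+1) * (D (n+1) * D (n+1))) :=
        coeff_eq_of_dvd (Kdvd n) (by omega)
    _ = coeff n ((Pp (n+1) * D (n+1))^2) := by
        rw [finite_gauss (n+1), show Pp (n+1)^2 * (D (n+1) * D (n+1))
          = (Pp (n+1) * D (n+1))^2 from by ring]
    _ = coeff n ((_root_.E 1)^2) := (coeff_eq_of_dvd h2 (by omega)).symm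

end SP
namespace SP

/-! ### the inverse of `E 4` -/

noncomputable def hgeom (i : ℕ) : PowerSeries ℤ :=
  PowerSeries.mk fun n => if (4*(i+1)) ∣ n then 1 else 0

lemma hgeom_inv (i : ℕ) : (1 - X^(4*(i+1))) * hgeom i = 1 := by
  apply PowerSeries.ext
  intro n
  have hXh : coeff n ((X^(4*(i+1)) : PowerSeries ℤ) * hgeom i)
      = if 4*(i+1) ≤ n then (if 4*(i+1) ∣ n - 4*(i+1) then (1:ℤ) else 0) else 0 := by
    rw [PowerSeries.coeff_X_pow_mul']
    by_cases hle : 4*(i+1) ≤ n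
    · rw [if_pos hle, if_pos hle, hgeom, coeff_mk]
    · rw [if_neg hle, if_neg hle]
  rw [sub_mul, one_mul, map_sub, hXh, hgeom, coeff_mk, PowerSeries.coeff_one]
  rcases Nat.eq_zero_or_pos n with rfl | hn
  · rw [if_pos (dvd_zero _), if_neg (show ¬ (4*(i+1) ≤ 0) by omega), if_pos rfl]
    norm_num
  · rw [if_neg (show ¬ (n = 0) by omega)]
    by_cases hle : 4*(i+1) ≤ n
    · rw [if_pos hle]
      by_cases hdvd : 4*(i+1) ∣ n
      · rw [if_pos hdvd, if_pos (Nat.dvd_sub hdvd dvd_rfl)]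
        norm_num
      · rw [if_neg hdvd, if_neg (show ¬ (4*(i+1) ∣ n - 4*(i+1)) from fun hc => hdvd (by
          have h2 := Nat.dvd_add hc (dvd_refl (4*(i+1)))
          rwa [Nat.sub_add_cancel hle] at h2))]
        norm_num
    · rw [if_neg hle, if_neg (show ¬ (4*(i+1) ∣ n) from fun hc => by
        have := Nat.le_of_dvd hn hc
        omega)]
      norm_num

lemma hgeom_sub_one_dvd {N i : ℕ} (h : N ≤ 4*(i+1)) :
    (X : PowerSeries ℤ)^N ∣ hgeom i - 1 := by
  rw [X_pow_dvd_iff]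
  intro m hm
  rw [map_sub, hgeom, coeff_mk, PowerSeries.coeff_one]
  rcases Nat.eq_zero_or_pos m with rfl | hm0
  · norm_num
  · rw [if_neg (show ¬ (m = 0) by omega), if_neg (show ¬ (4*(i+1) ∣ m) from fun hc => by
      have := Nat.le_of_dvd hm0 hc
      omega), sub_zero]

lemma coeff_stab' (f : ℕ → PowerSeries ℤ)
    (hf : ∀ m i : ℕ, m < i → (X : PowerSeries ℤ)^(m+1) ∣ f i - 1) (m : ℕ) (s : Finset ℕ)
    (hs : Finset.range (m+1) ⊆ s) :
    coeff m (∏ i ∈ s, f i) = coeff m (∏ i ∈ Finset.range (m+1), f i) := by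
  classical
  rw [← Finset.prod_sdiff hs]
  have hdvd : (X : PowerSeries ℤ)^(m+1) ∣ (∏ i ∈ s \ Finset.range (m+1), f i) - 1 := by
    apply prod_sub_one_dvd
    intro i hi
    have hi' : m < i := by
      have := (Finset.mem_sdiff.mp hi).2
      exact Nat.le_of_not_lt (by simpa [Finset.mem_range] using this)
    exact hf m i hi'
  have h2 : (X : PowerSeries ℤ)^(m+1) ∣ ((∏ i ∈ s \ Finset.range (m+1), f i) - 1)
      * ∏ i ∈ Finset.range (m+1), f i := hdvd.mul_right _
  rw [X_pow_dvd_iff] at h2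
  have := h2 m (Nat.lt_succ_self m)
  rw [sub_mul, one_mul, map_sub, sub_eq_zero] at this
  exact this

noncomputable def HH : PowerSeries ℤ :=
  PowerSeries.mk fun n => coeff n (∏ i ∈ Finset.range (n+1), hgeom i)

lemma hgeom_cond (m i : ℕ) (h : m < i) : (X : PowerSeries ℤ)^(m+1) ∣ hgeom i - 1 :=
  hgeom_sub_one_dvd (by omega)

lemma HH_trunc (N : ℕ) : (X : PowerSeries ℤ)^N ∣ HH - ∏ i ∈ Finset.range N, hgeom i := by
  rw [X_pow_dvd_iff]
  intro m hm
  rw [map_sub, sub_eq_zero, HH, coeff_mk]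
  exact (coeff_stab' hgeom hgeom_cond m (Finset.range N)
    (by intro x hx; simp only [Finset.mem_range] at *; omega)).symm

lemma HH_mul_E4 : HH * _root_.E 4 = 1 := by
  apply PowerSeries.ext
  intro n
  have h1 := HH_trunc (n+1)
  have h2 := E_trunc 4 (by norm_num) (n+1)
  have hmul := dvd_mul_sub_mul h1 h2
  have hpp : (∏ i ∈ Finset.range (n+1), hgeom i)
      * (∏ i ∈ Finset.range (n+1), (1 - (X : PowerSeries ℤ)^(4*(i+1)))) = 1 := by
    rw [← Finset.prod_mul_distrib]
    apply Finset.prod_eq_one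
    intro i _
    rw [mul_comm]
    exact hgeom_inv i
  rw [hpp] at hmul
  exact coeff_eq_of_dvd hmul (by omega)

/-- nonneg coefficients -/
lemma coeff_hgeom_nonneg (i k : ℕ) : 0 ≤ coeff k (hgeom i) := by
  rw [hgeom, coeff_mk]
  split_ifs <;> norm_num

lemma coeff_hgeom_supp (i k : ℕ) (h : ¬ (4 ∣ k)) : coeff k (hgeom i) = 0 := by
  rw [hgeom, coeff_mk, if_neg]
  intro hc
  exact h (dvd_trans ⟨i+1, rfl⟩ hc)

lemma mul_coeff_nonneg {f g : PowerSeries ℤ} (hf : ∀ k, 0 ≤ coeff k f)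
    (hg : ∀ k, 0 ≤ coeff k g) : ∀ k, 0 ≤ coeff k (f * g) := by
  intro k
  rw [coeff_mul]
  exact Finset.sum_nonneg fun p _ => mul_nonneg (hf p.1) (hg p.2)

lemma mul_coeff_supp {f g : PowerSeries ℤ} (hf : ∀ k, ¬ (4 ∣ k) → coeff k f = 0)
    (hg : ∀ k, ¬ (4 ∣ k) → coeff k g = 0) :
    ∀ k, ¬ (4 ∣ k) → coeff k (f * g) = 0 := by
  intro k hk
  rw [coeff_mul]
  apply Finset.sum_eq_zero
  intro p hp
  have hpk : p.1 + p.2 = k := Finset.HasAntidiagonal.mem_antidiagonal.mp hp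
  by_cases h1 : 4 ∣ p.1
  · have h2 : ¬ (4 ∣ p.2) := fun hc => hk (by omega)
    rw [hg p.2 h2, mul_zero]
  · rw [hf p.1 h1, zero_mul]

lemma prod_coeff_nonneg (s : Finset ℕ) (f : ℕ → PowerSeries ℤ)
    (h : ∀ i ∈ s, ∀ k, 0 ≤ coeff k (f i)) : ∀ k, 0 ≤ coeff k (∏ i ∈ s, f i) := by
  classical
  induction s using Finset.induction with
  | empty =>
    intro k
    rw [Finset.prod_empty, PowerSeries.coeff_one]
    split_ifs <;> norm_num
  | @insert a s ha ih =>
    rw [Finset.prod_insert ha]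
    exact mul_coeff_nonneg (h a (Finset.mem_insert_self a s))
      (ih fun i hi => h i (Finset.mem_insert_of_mem hi))

lemma prod_coeff_supp (s : Finset ℕ) (f : ℕ → PowerSeries ℤ)
    (h : ∀ i ∈ s, ∀ k, ¬ (4 ∣ k) → coeff k (f i) = 0) :
    ∀ k, ¬ (4 ∣ k) → coeff k (∏ i ∈ s, f i) = 0 := by
  classical
  induction s using Finset.induction with
  | empty =>
    intro k hk
    rw [Finset.prod_empty, PowerSeries.coeff_one, if_neg]
    intro hc
    exact hk (by rw [hc]; norm_num)
  | @insert a s ha ih =>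
    rw [Finset.prod_insert ha]
    exact mul_coeff_supp (h a (Finset.mem_insert_self a s))
      (ih fun i hi => h i (Finset.mem_insert_of_mem hi))

lemma HH_nonneg (n : ℕ) : 0 ≤ coeff n HH := by
  rw [HH, coeff_mk]
  exact prod_coeff_nonneg _ _ (fun i _ => coeff_hgeom_nonneg i) n

lemma HH_supp (n : ℕ) (h : ¬ (4 ∣ n)) : coeff n HH = 0 := by
  rw [HH, coeff_mk]
  exact prod_coeff_supp _ _ (fun i _ => coeff_hgeom_supp i) n h

lemma HH_pos (n : ℕ) (h : 4 ∣ n) : 1 ≤ coeff n HH := by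
  rw [HH, coeff_mk, Finset.prod_range_succ', coeff_mul]
  have hmem : ((0, n) : ℕ × ℕ) ∈ Finset.HasAntidiagonal.antidiagonal n := by
    simp
  have hc0 : coeff 0 (∏ i ∈ Finset.range n, hgeom (i+1)) = 1 := by
    rw [PowerSeries.coeff_zero_eq_constantCoeff_apply, map_prod]
    apply Finset.prod_eq_one
    intro i _
    rw [hgeom, PowerSeries.constantCoeff_mk, if_pos (dvd_zero _)]
  have hle := Finset.single_le_sum
    (f := fun p : ℕ × ℕ => coeff p.1 (∏ i ∈ Finset.range n, hgeom (i+1)) * coeff p.2 (hgeom 0))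
    (fun p _ => mul_nonneg
      (prod_coeff_nonneg _ _ (fun i _ => coeff_hgeom_nonneg (i+1)) p.1)
      (coeff_hgeom_nonneg 0 p.2)) hmem
  simp only [] at hle
  rw [hc0, one_mul, hgeom, coeff_mk, if_pos (by simpa using h)] at hle
  exact hle

end SP
namespace SP

/-! ### final assembly -/

noncomputable def r2 (i : ℕ) : ℤ := ∑ p ∈ Finset.HasAntidiagonal.antidiagonal i, sth p.1 * sth p.2

lemma coeff_ThTh (i : ℕ) : coeff i (Th * Th) = (-1)^i * r2 i := by
  rw [coeff_mul, r2, Finset.mul_sum]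
  apply Finset.sum_congr rfl
  intro p hp
  have hpi : p.1 + p.2 = i := Finset.HasAntidiagonal.mem_antidiagonal.mp hp
  rw [Th, coeff_mk, coeff_mk, ← hpi, pow_add]
  ring

lemma sth_nonneg (n : ℕ) : 0 ≤ sth n := by
  rw [sth]
  split_ifs <;> norm_num

lemma r2_nonneg (i : ℕ) : 0 ≤ r2 i :=
  Finset.sum_nonneg fun p _ => mul_nonneg (sth_nonneg p.1) (sth_nonneg p.2)

lemma sth_zero : sth 0 = 1 := by norm_num [sth]

lemma sth_one : sth 1 = 2 := by norm_num [sth]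

lemma sth_two : sth 2 = 0 := by
  have h1 : 1 ≤ Nat.sqrt 2 := Nat.le_sqrt.mpr (by norm_num)
  have h2 : Nat.sqrt 2 < 2 := Nat.sqrt_lt.mpr (by norm_num)
  have h3 : Nat.sqrt 2 = 1 := by omega
  rw [sth, h3, if_neg (by norm_num)]

lemma r2_zero : r2 0 = 1 := by
  rw [r2, Finset.Nat.sum_antidiagonal_eq_sum_range_succ_mk, Finset.sum_range_succ,
    Finset.sum_range_zero]
  norm_num [sth_zero]

lemma r2_one : r2 1 = 4 := by
  rw [r2, Finset.Nat.sum_antidiagonal_eq_sum_range_succ_mk, Finset.sum_range_succ,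
    Finset.sum_range_one]
  norm_num [sth_zero, sth_one]

lemma r2_two : r2 2 = 4 := by
  rw [r2, Finset.Nat.sum_antidiagonal_eq_sum_range_succ_mk,
    show Nat.succ 2 = 0+1+1+1 from rfl, Finset.sum_range_succ, Finset.sum_range_succ,
    Finset.sum_range_succ, Finset.sum_range_zero]
  norm_num [sth_zero, sth_one, sth_two]

lemma sq_mod4 (t : ℕ) : t*t % 4 = 0 ∨ t*t % 4 = 1 := by
  rcases Nat.even_or_odd t with ⟨u, rfl⟩ | ⟨u, rfl⟩
  · left
    have h : (u+u)*(u+u) = 4*(u*u) := by ring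
    omega
  · right
    have h : (2*u+1)*(2*u+1) = 4*(u*u+u)+1 := by ring
    omega

lemma sth_mod (u : ℕ) (h : sth u ≠ 0) : u % 4 = 0 ∨ u % 4 = 1 := by
  rw [sth] at h
  by_cases hsq : Nat.sqrt u * Nat.sqrt u = u
  · have := sq_mod4 (Nat.sqrt u)
    omega
  · rw [if_neg hsq] at h
    exact absurd rfl h

lemma r2_mod3 (i : ℕ) (h : i % 4 = 3) : r2 i = 0 := by
  rw [r2]
  apply Finset.sum_eq_zero
  intro p hp
  have hpi : p.1 + p.2 = i := Finset.HasAntidiagonal.mem_antidiagonal.mp hp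
  by_cases h1 : sth p.1 = 0
  · rw [h1, zero_mul]
  by_cases h2 : sth p.2 = 0
  · rw [h2, mul_zero]
  exfalso
  have m1 := sth_mod p.1 h1
  have m2 := sth_mod p.2 h2
  omega

lemma E_const (k : ℕ) (hk : 0 < k) : constantCoeff (_root_.E k) = 1 := by
  rw [← PowerSeries.coeff_zero_eq_constantCoeff_apply, E_eq k hk, coeff_mk,
    Finset.prod_range_one, map_sub, PowerSeries.coeff_one, PowerSeries.coeff_X_pow,
    if_pos rfl, if_neg (show ¬ ((0:ℕ) = k*(0+1)) by omega)]
  norm_num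

end SP

/-- Sign-pattern of the coefficients of `(q;q)_∞^4 / ((q^2;q^2)_∞^2 (q^4;q^4)_∞)`. -/
theorem sign_pattern_E1_fourth_div_E2_sq_E4
    (a : ℕ → ℤ) (ha : PowerSeries.mk a * ((E 2) ^ 2 * E 4) = (E 1) ^ 4) :
    ∀ n : ℕ,
      (n % 4 = 0 ∨ n % 4 = 2 → 0 < a n) ∧
      (n % 4 = 1 → a n < 0) ∧
      (n % 4 = 3 → a n = 0) := by
  classical
  have hunit : IsUnit ((E 2)^2 * E 4) := by
    rw [PowerSeries.isUnit_iff_constantCoeff, map_mul, map_pow,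
      SP.E_const 2 (by norm_num), SP.E_const 4 (by norm_num)]
    simp
  have hmk : PowerSeries.mk a = SP.Th * SP.Th * SP.HH := by
    apply hunit.mul_right_cancel
    rw [ha]
    calc (E 1)^4 = ((E 1)^2)^2 * 1 := by ring
      _ = (SP.Th * E 2)^2 * (SP.HH * E 4) := by rw [SP.gauss, SP.HH_mul_E4]
      _ = SP.Th * SP.Th * SP.HH * ((E 2)^2 * E 4) := by ring
  intro n
  have han : a n = ∑ p ∈ Finset.HasAntidiagonal.antidiagonal n,
      ((-1 : ℤ)^p.1 * SP.r2 p.1) * PowerSeries.coeff p.2 SP.HH := by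
    calc a n = PowerSeries.coeff n (PowerSeries.mk a) := (PowerSeries.coeff_mk n a).symm
      _ = PowerSeries.coeff n (SP.Th * SP.Th * SP.HH) := by rw [hmk]
      _ = ∑ p ∈ Finset.HasAntidiagonal.antidiagonal n,
          PowerSeries.coeff p.1 (SP.Th * SP.Th) * PowerSeries.coeff p.2 SP.HH :=
        PowerSeries.coeff_mul n _ _
      _ = _ := by
        apply Finset.sum_congr rfl
        intro p _
        rw [SP.coeff_ThTh]
  refine ⟨?_, ?_, ?_⟩
  · -- n ≡ 0 or 2 mod 4 : positive
    intro hmod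
    have hterm : ∀ p ∈ Finset.HasAntidiagonal.antidiagonal n,
        0 ≤ ((-1 : ℤ)^p.1 * SP.r2 p.1) * PowerSeries.coeff p.2 SP.HH := by
      intro p hp
      have hpn : p.1 + p.2 = n := Finset.HasAntidiagonal.mem_antidiagonal.mp hp
      by_cases h4 : 4 ∣ p.2
      · have heven : Even p.1 := Nat.even_iff.mpr (by omega)
        rw [heven.neg_one_pow, one_mul]
        exact mul_nonneg (SP.r2_nonneg p.1) (SP.HH_nonneg p.2)
      · rw [SP.HH_supp p.2 h4, mul_zero]
    rcases hmod with h0 | h2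
    · have hmem : ((0, n) : ℕ × ℕ) ∈ Finset.HasAntidiagonal.antidiagonal n := by simp
      have hle := Finset.single_le_sum hterm hmem
      have hval : ((-1 : ℤ)^(0:ℕ) * SP.r2 0) * PowerSeries.coeff n SP.HH
          = PowerSeries.coeff n SP.HH := by
        rw [SP.r2_zero]
        norm_num
      have hpos := SP.HH_pos n (by omega)
      rw [han]
      rw [hval] at hle
      linarith
    · have hmem : ((2, n - 2) : ℕ × ℕ) ∈ Finset.HasAntidiagonal.antidiagonal n :=
        Finset.HasAntidiagonal.mem_antidiagonal.mpr (by omega)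
      have hle := Finset.single_le_sum hterm hmem
      have hval : ((-1 : ℤ)^(2:ℕ) * SP.r2 2) * PowerSeries.coeff (n-2) SP.HH
          = 4 * PowerSeries.coeff (n-2) SP.HH := by
        rw [SP.r2_two]
        norm_num
      have hpos := SP.HH_pos (n-2) (by omega)
      rw [han]
      rw [hval] at hle
      linarith
  · -- n ≡ 1 mod 4 : negative
    intro hmod
    have hterm : ∀ p ∈ Finset.HasAntidiagonal.antidiagonal n,
        0 ≤ -(((-1 : ℤ)^p.1 * SP.r2 p.1) * PowerSeries.coeff p.2 SP.HH) := by
      intro p hp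
      have hpn : p.1 + p.2 = n := Finset.HasAntidiagonal.mem_antidiagonal.mp hp
      by_cases h4 : 4 ∣ p.2
      · have hodd : Odd p.1 := Nat.odd_iff.mpr (by omega)
        rw [hodd.neg_one_pow]
        have := mul_nonneg (SP.r2_nonneg p.1) (SP.HH_nonneg p.2)
        linarith [this]
      · rw [SP.HH_supp p.2 h4, mul_zero]
        norm_num
    have hmem : ((1, n - 1) : ℕ × ℕ) ∈ Finset.HasAntidiagonal.antidiagonal n :=
      Finset.HasAntidiagonal.mem_antidiagonal.mpr (by omega)
    have hle := Finset.single_le_sum hterm hmem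
    have hsum : ∑ p ∈ Finset.HasAntidiagonal.antidiagonal n,
        -(((-1 : ℤ)^p.1 * SP.r2 p.1) * PowerSeries.coeff p.2 SP.HH)
        = -∑ p ∈ Finset.HasAntidiagonal.antidiagonal n,
          ((-1 : ℤ)^p.1 * SP.r2 p.1) * PowerSeries.coeff p.2 SP.HH :=
      Finset.sum_neg_distrib _
    have hval : -(((-1 : ℤ)^(1:ℕ) * SP.r2 1) * PowerSeries.coeff (n-1) SP.HH)
        = 4 * PowerSeries.coeff (n-1) SP.HH := by
      rw [SP.r2_one]
      norm_num
    have hpos := SP.HH_pos (n-1) (by omega)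
    rw [han]
    rw [hsum, hval] at hle
    linarith
  · -- n ≡ 3 mod 4 : zero
    intro hmod
    rw [han]
    apply Finset.sum_eq_zero
    intro p hp
    have hpn : p.1 + p.2 = n := Finset.HasAntidiagonal.mem_antidiagonal.mp hp
    by_cases h4 : 4 ∣ p.2
    · rw [SP.r2_mod3 p.1 (by omega), mul_zero, zero_mul]
    · rw [SP.HH_supp p.2 h4, mul_zero]
end
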